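/- arXiv:0809.3257 — 6 statements merged into one kernel-verified Lean document; each statement's English description precedes it below -/
import Mathlib

section
/- Let (X_n, d_n), n ∈ ℕ, be a sequence of metric spaces, and for each n ∈ ℕ let B_n^1 ⊆ B_n^2 ⊆ B_n^3 ⊆ ⋯ ⊆ X_n be a nested sequence of subsets. Assume that for every i ∈ ℕ the sequence of metric spaces (B_n^i, d_n), n ∈ ℕ, is uniformly compact. Then there exist a complete metric space Z, a strictly increasing sequence of indices (n_m), isometric embeddings φ_m : X_{n_m} → Z for every m ∈ ℕ, and compact subsets Y^1 ⊆ Y^2 ⊆ ⋯ ⊆ Z such that φ_m(B_{n_m}^i) ⊆ Y^i for all m ∈ ℕ and all i ∈ ℕ. -/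
/-!
Inserting into every `Bₙⁱ` the same point of `Xₙ ⊕ {∗}` (a point of the first nonempty `Bₙⁱ`, or
`∗` if there is none) makes all `Bₙⁱ` nonempty without spoiling uniform compactness. For every `i`
and `k` fix a `2⁻ᵏ`-net of `Bₙⁱ` whose size does not depend on `n`. Distances between net points
are bounded independently of `n`, so along a subsequence they converge, and along a further one
the finitely many distances between the first `m` labels at stage `m` are within `2⁻ᵐ` of their
limits. Consecutive spaces can then be glued approximately along these finite nets
(`Metric.glueMetricApprox`), corresponding net points ending up `2⁻ᵐ` apart. In the inductive
limit of the glued chain every net label traces a Cauchy sequence, which makes each `⋃ₘ Bⁱ`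
totally bounded; `Z` is the completion and `Yⁱ` the closure of `⋃ₘ Bⁱ`.
-/

universe u v

open Metric Set Filter Topology

attribute [local instance] Metric.metricSpaceSum

namespace GlueChain

variable {X : ℕ → Type u}

def Space (X : ℕ → Type u) : ℕ → Type u
  | 0 => X 0
  | n + 1 => Space X n ⊕ X (n + 1)

def top : ∀ n, X n → Space X n
  | 0 => id
  | _ + 1 => Sum.inr

def inl (n : ℕ) : Space X n → Space X (n + 1) := Sum.inl

variable [∀ n, MetricSpace (X n)] {Z : ℕ → Type v} [∀ n, Nonempty (Z n)]
  (Φ : ∀ n, Z n → X n) (Ψ : ∀ n, Z n → X (n + 1)) (ε : ℕ → ℝ) (hε : ∀ n, 0 < ε n)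
  (H : ∀ n p q, |dist (Φ n p) (Φ n q) - dist (Ψ n p) (Ψ n q)| ≤ 2 * ε n)

noncomputable def metric : ∀ n, {d : MetricSpace (Space X n) //
    @Isometry _ _ _ d.toPseudoEMetricSpace (top (X := X) n)}
  | 0 => ⟨(inferInstance : MetricSpace (X 0)), isometry_id⟩
  | n + 1 =>
    letI := (metric n).1
    letI d : MetricSpace (Space X (n + 1)) :=
      glueMetricApprox (fun z => top n (Φ n z)) (Ψ n) (ε n) (hε n)
        (fun p q => by simpa only [(metric n).2.dist_eq] using H n p q)
    ⟨d, Isometry.of_dist_eq fun _ _ => rfl⟩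

end GlueChain

open GlueChain in
theorem exists_isometry_glue_chain {X : ℕ → Type u} [∀ n, MetricSpace (X n)] {Z : ℕ → Type v}
    [∀ n, Nonempty (Z n)] (Φ : ∀ n, Z n → X n) (Ψ : ∀ n, Z n → X (n + 1)) (ε : ℕ → ℝ)
    (hε : ∀ n, 0 < ε n)
    (H : ∀ n p q, |dist (Φ n p) (Φ n q) - dist (Ψ n p) (Ψ n q)| ≤ 2 * ε n) :
    ∃ (L : Type u) (_ : MetricSpace L) (ι : ∀ n, X n → L), (∀ n, Isometry (ι n)) ∧
      ∀ n z, dist (ι n (Φ n z)) (ι (n + 1) (Ψ n z)) = ε n := by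
  let _ (n : ℕ) : MetricSpace (Space X n) := (metric Φ Ψ ε hε H n).1
  have hinl (n : ℕ) : Isometry (inl (X := X) n) := Isometry.of_dist_eq fun _ _ => rfl
  refine ⟨InductiveLimit hinl, inferInstance, fun n => toInductiveLimit hinl n ∘ top n,
    fun n => (toInductiveLimit_isometry hinl n).comp (metric Φ Ψ ε hε H n).2, fun n z => ?_⟩
  change dist (toInductiveLimit hinl n (top n (Φ n z)))
    (toInductiveLimit hinl (n + 1) (top (n + 1) (Ψ n z))) = ε n
  rw [← toInductiveLimit_commute hinl n, Function.comp_apply,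
    (toInductiveLimit_isometry hinl (n + 1)).dist_eq]
  exact glueDist_glued_points (fun z => top n (Φ n z)) (Ψ n) (ε n) z

theorem exists_strictMono_dist_lt_on_finite {κ : Type*} [Countable κ] (f : ℕ → κ → ℝ)
    (C : κ → ℝ) (hf : ∀ n c, |f n c| ≤ C c) {S : ℕ → Set κ} (hS : ∀ m, (S m).Finite)
    {δ : ℕ → ℝ} (hδ : ∀ m, 0 < δ m) :
    ∃ (g : κ → ℝ) (w : ℕ → ℕ), StrictMono w ∧ ∀ m, ∀ c ∈ S m, dist (f (w m) c) (g c) < δ m := by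
  have hK : IsCompact (univ.pi fun c => Icc (-C c) (C c)) :=
    isCompact_univ_pi fun _ => isCompact_Icc
  obtain ⟨g, -, u, hu, hlim⟩ := hK.tendsto_subseq fun n c _ => abs_le.1 (hf n c)
  have hev (m : ℕ) : ∀ᶠ n in atTop, ∀ c ∈ S m, dist (f (u n) c) (g c) < δ m :=
    (hS m).eventually_all.2 fun c _ =>
      Metric.tendsto_nhds.1 (tendsto_pi_nhds.1 hlim c) (δ m) (hδ m)
  obtain ⟨v, hv, hvS⟩ := extraction_forall_of_eventually hev
  exact ⟨g, u ∘ v, hu.comp hv, hvS⟩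

theorem exists_seq_net_of_subset_iUnion_ball {X : Type*} [PseudoMetricSpace X] {s : Set X}
    (hs : s.Nonempty) {t : Finset X} {r : ℝ} (h : s ⊆ ⋃ x ∈ t, ball x r) :
    ∃ F : ℕ → X, (∀ j, F j ∈ s) ∧ ∀ x ∈ s, ∃ j < t.card, dist x (F j) < 2 * r := by
  have hnear (c : X) : ∃ y ∈ s, (ball c r ∩ s).Nonempty → dist c y < r := by
    by_cases hc : (ball c r ∩ s).Nonempty
    · obtain ⟨y, hyc, hys⟩ := hc
      exact ⟨y, hys, fun _ => mem_ball'.1 hyc⟩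
    · exact ⟨hs.some, hs.some_mem, fun h => absurd h hc⟩
  choose p hps hpc using hnear
  refine ⟨fun j => p (t.toList.getD j hs.some), fun j => hps _, fun x hx => ?_⟩
  obtain ⟨c, hct, hxc⟩ := mem_iUnion₂.1 (h hx)
  obtain ⟨j, hj, rfl⟩ := List.getElem_of_mem (Finset.mem_toList.2 hct)
  refine ⟨j, t.length_toList ▸ hj, ?_⟩
  dsimp only
  rw [show t.toList.getD j hs.some = t.toList[j] from List.getD_eq_getElem _ _ hj]
  calc dist x (p t.toList[j]) ≤ dist x t.toList[j] + dist t.toList[j] (p t.toList[j]) :=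
        dist_triangle _ _ _
    _ < r + r := add_lt_add (mem_ball.1 hxc) (hpc _ ⟨x, hxc, hx⟩)
    _ = 2 * r := by ring

theorem dist_le_of_dist_succ_le_geometric {L : Type*} [PseudoMetricSpace L] {f : ℕ → L}
    {m n : ℕ} (hmn : m ≤ n) (hf : ∀ l, m ≤ l → dist (f l) (f (l + 1)) ≤ (1 / 2) ^ l) :
    dist (f m) (f n) ≤ 2 * (1 / 2) ^ m :=
  calc dist (f m) (f n) ≤ ∑ l ∈ Finset.Ico m n, (1 / 2 : ℝ) ^ l :=
        dist_le_Ico_sum_of_dist_le hmn fun hl _ => hf _ hl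
    _ ≤ (1 / 2) ^ m / (1 - 1 / 2) := geom_sum_Ico_le_of_lt_one (by norm_num) (by norm_num)
    _ = 2 * (1 / 2) ^ m := by ring

theorem totallyBounded_iUnion_of_nets {L : Type*} [PseudoMetricSpace L] {S : ℕ → Set L}
    (q : ℕ → ℕ × ℕ → L) (M : ℕ → ℕ) (n₀ : ℕ)
    (hq : ∀ n k, ∀ z ∈ S n, ∃ j < M k, dist z (q n (k, j)) < (1 / 2) ^ k)
    (hstep : ∀ n ≥ n₀, ∀ a ≤ (n, n), dist (q n a) (q (n + 1) a) ≤ (1 / 2) ^ n) :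
    TotallyBounded (⋃ n, S n) := by
  rw [Metric.totallyBounded_iff]
  intro ε hε
  obtain ⟨k, hk⟩ := exists_pow_lt_of_lt_one (half_pos hε) (by norm_num : (1 / 2 : ℝ) < 1)
  obtain ⟨m₁, hm₁⟩ := exists_pow_lt_of_lt_one (by positivity : 0 < ε / 4)
    (by norm_num : (1 / 2 : ℝ) < 1)
  set m₀ := max n₀ (max k (max (M k) m₁))
  refine ⟨(fun p : ℕ × ℕ => q p.1 (k, p.2)) '' (Iic m₀ ×ˢ Iio (M k)),
    ((finite_Iic m₀).prod (finite_Iio _)).image _, ?_⟩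
  simp only [iUnion_subset_iff]
  intro n z hz
  obtain ⟨j, hj, hzj⟩ := hq n k z hz
  rcases le_or_gt n m₀ with hn | hn
  · refine mem_biUnion (mem_image_of_mem _ (show (n, j) ∈ Iic m₀ ×ˢ Iio (M k) from
      ⟨mem_Iic.2 hn, mem_Iio.2 hj⟩)) (mem_ball.2 ?_)
    linarith
  · refine mem_biUnion (mem_image_of_mem _ (show (m₀, j) ∈ Iic m₀ ×ˢ Iio (M k) from
      ⟨mem_Iic.2 le_rfl, mem_Iio.2 hj⟩)) (mem_ball.2 ?_)
    have hchain : dist (q m₀ (k, j)) (q n (k, j)) ≤ 2 * (1 / 2) ^ m₀ :=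
      dist_le_of_dist_succ_le_geometric hn.le fun l hl =>
        hstep l (by omega) (k, j) (Prod.mk_le_mk.2 ⟨by omega, by omega⟩)
    have hm₀ : (1 / 2 : ℝ) ^ m₀ ≤ (1 / 2) ^ m₁ :=
      pow_le_pow_of_le_one (by norm_num) (by norm_num) (by omega)
    calc dist z (q m₀ (k, j)) ≤ dist z (q n (k, j)) + dist (q m₀ (k, j)) (q n (k, j)) :=
          dist_triangle_right _ _ _
      _ < ε := by linarith

section Reduction

variable {X Y : Type*}

theorem exists_mem_image_inl_of_monotone [Nonempty Y] {B : ℕ → Set X} (hB : Monotone B) :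
    ∃ o : X ⊕ Y, ∀ i, (B i).Nonempty → o ∈ Sum.inl '' B i := by
  classical
  by_cases h : ∃ i, (B i).Nonempty
  · exact ⟨Sum.inl (Nat.find_spec h).some, fun i hi =>
      mem_image_of_mem _ (hB (Nat.find_min' h hi) (Nat.find_spec h).some_mem)⟩
  · exact ⟨Sum.inr (Classical.arbitrary Y), fun i hi => absurd ⟨i, hi⟩ h⟩

variable [MetricSpace X] [MetricSpace Y] {B : Set X} {o : X ⊕ Y}

theorem ediam_insert_image_inl_le (ho : B.Nonempty → o ∈ Sum.inl '' B) :
    ediam (insert o (Sum.inl '' B)) ≤ ediam B := by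
  rcases B.eq_empty_or_nonempty with rfl | hB
  · simp
  · rw [insert_eq_of_mem (ho hB), isometry_inl.ediam_image]

theorem exists_finset_insert_image_inl_subset_iUnion_ball {s : Finset X} {r : ℝ} (hr : 0 < r)
    (h : B ⊆ ⋃ x ∈ s, ball x r) :
    ∃ t : Finset (X ⊕ Y), t.card ≤ s.card + 1 ∧ insert o (Sum.inl '' B) ⊆ ⋃ z ∈ t, ball z r := by
  classical
  refine ⟨insert o (s.image Sum.inl),
    (Finset.card_insert_le _ _).trans (Nat.add_le_add_right Finset.card_image_le 1),
    insert_subset_iff.2 ⟨mem_biUnion (Finset.mem_insert_self _ _) (mem_ball_self hr), ?_⟩⟩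
  rintro _ ⟨x, hx, rfl⟩
  obtain ⟨c, hc, hxc⟩ := mem_iUnion₂.1 (h hx)
  refine mem_biUnion (Finset.mem_insert_of_mem (Finset.mem_image_of_mem _ hc)) ?_
  rwa [mem_ball, isometry_inl.dist_eq]

end Reduction

theorem exists_isometry_totallyBounded_of_nonempty (X : ℕ → Type u) [∀ n, MetricSpace (X n)]
    (B : ∀ n : ℕ, ℕ → Set (X n)) (hne : ∀ n i, (B n i).Nonempty)
    (hnested : ∀ n i, B n i ⊆ B n (i + 1))
    (hdiam : ∀ i : ℕ, ∃ D : ℝ, ∀ n, ediam (B n i) ≤ ENNReal.ofReal D)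
    (hcover : ∀ i : ℕ, ∃ N : ℝ → ℕ, ∀ ε : ℝ, 0 < ε → ∀ n,
      ∃ s : Finset (X n), s.card ≤ N ε ∧ B n i ⊆ ⋃ x ∈ s, ball x ε) :
    ∃ w : ℕ → ℕ, StrictMono w ∧ ∃ (L : Type u) (_ : MetricSpace L) (ι : ∀ m, X (w m) → L),
      (∀ m, Isometry (ι m)) ∧ ∀ i, TotallyBounded (⋃ m, ι m '' B (w m) i) := by
  have hmono (n : ℕ) : Monotone (B n) := monotone_nat_of_le_succ (hnested n)
  choose D hD using hdiam
  choose N hN using hcover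
  have hnet (n i k : ℕ) : ∃ F : ℕ → X n, (∀ j, F j ∈ B n i) ∧
      ∀ x ∈ B n i, ∃ j < N i ((1 / 2) ^ (k + 1)), dist x (F j) < (1 / 2) ^ k := by
    obtain ⟨s, hs, hcov⟩ := hN i ((1 / 2) ^ (k + 1)) (by positivity) n
    obtain ⟨F, hFB, hF⟩ := exists_seq_net_of_subset_iUnion_ball (hne n i) hcov
    refine ⟨F, hFB, fun x hx => ?_⟩
    obtain ⟨j, hj, hd⟩ := hF x hx
    exact ⟨j, hj.trans_le hs, hd.trans_eq (by ring)⟩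
  choose F hFB hF using hnet
  -- net points are labelled by `(i, k, j)`: the `j`-th point of the `(1/2)^k`-net of `B n i`
  let P (n : ℕ) (a : ℕ × ℕ × ℕ) : X n := F n a.1 a.2.1 a.2.2
  have hPdist (n : ℕ) (a b : ℕ × ℕ × ℕ) :
      |dist (P n a) (P n b)| ≤ max (D (max a.1 b.1)) 0 := by
    rw [abs_of_nonneg dist_nonneg, ← edist_le_ofReal (le_max_right _ _)]
    calc edist (P n a) (P n b) ≤ ediam (B n (max a.1 b.1)) :=
          edist_le_ediam_of_mem (hmono n (le_max_left _ _) (hFB _ _ _ _))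
            (hmono n (le_max_right _ _) (hFB _ _ _ _))
      _ ≤ _ := (hD _ n).trans (ENNReal.ofReal_le_ofReal (le_max_left _ _))
  obtain ⟨g, w, hw, hwg⟩ := exists_strictMono_dist_lt_on_finite
    (fun n (c : (ℕ × ℕ × ℕ) × (ℕ × ℕ × ℕ)) => dist (P n c.1) (P n c.2)) _
    (fun n c => hPdist n c.1 c.2) (S := fun m => Iic (m, m, m) ×ˢ Iic (m, m, m))
    (fun m => (finite_Iic _).prod (finite_Iic _)) (δ := fun m => (1 / 2) ^ m)
    (fun m => by positivity)
  have hclose (m : ℕ) (p q : Iic (m, m, m)) :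
      |dist (P (w m) p) (P (w m) q) - dist (P (w (m + 1)) p) (P (w (m + 1)) q)| ≤
        2 * (1 / 2) ^ m := by
    have hsucc : Iic (m, m, m) ⊆ Iic (m + 1, m + 1, m + 1) :=
      Iic_subset_Iic.2 (Prod.mk_le_mk.2 ⟨m.le_succ, m.le_succ, m.le_succ⟩)
    have h₁ := hwg m (p, q) ⟨p.2, q.2⟩
    have h₂ := hwg (m + 1) (p, q) ⟨hsucc p.2, hsucc q.2⟩
    have hpow : (1 / 2 : ℝ) ^ (m + 1) ≤ (1 / 2) ^ m :=
      pow_le_pow_of_le_one (by norm_num) (by norm_num) m.le_succ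
    dsimp only at h₁ h₂
    rw [Real.dist_eq, abs_lt] at h₁ h₂
    rw [abs_le]
    constructor <;> linarith
  have _ (m : ℕ) : Nonempty (Iic (m, m, m)) := nonempty_Iic.to_subtype
  obtain ⟨L, _, ι, hι, hglue⟩ := exists_isometry_glue_chain
    (fun m (a : Iic (m, m, m)) => P (w m) a)
    (fun m a => P (w (m + 1)) a) (fun m => (1 / 2 : ℝ) ^ m) (fun m => by positivity) hclose
  refine ⟨w, hw, L, inferInstance, ι, hι, fun i => totallyBounded_iUnion_of_nets
    (fun m a => ι m (P (w m) (i, a))) (fun k => N i ((1 / 2) ^ (k + 1))) i ?_ ?_⟩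
  · rintro m k _ ⟨x, hx, rfl⟩
    obtain ⟨j, hj, hd⟩ := hF (w m) i k x hx
    exact ⟨j, hj, by rwa [(hι m).dist_eq]⟩
  · intro m hm a ha
    exact (hglue m ⟨(i, a), Prod.mk_le_mk.2 ⟨hm, ha⟩⟩).le

theorem exists_complete_of_totallyBounded_iUnion {X : ℕ → Type u} [∀ n, MetricSpace (X n)]
    {L : Type u} [MetricSpace L] (ι : ∀ n, X n → L) (hι : ∀ n, Isometry (ι n))
    (B : ∀ n : ℕ, ℕ → Set (X n)) (hnested : ∀ n i, B n i ⊆ B n (i + 1))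
    (hTB : ∀ i, TotallyBounded (⋃ n, ι n '' B n i)) :
    ∃ (Z : Type u) (dZ : MetricSpace Z),
      letI := dZ
      CompleteSpace Z ∧
      ∃ φ : ∀ n, X n → Z, (∀ n, Isometry (φ n)) ∧
        ∃ Y : ℕ → Set Z,
          (∀ i, IsCompact (Y i)) ∧ (∀ i, Y i ⊆ Y (i + 1)) ∧ ∀ n i, φ n '' B n i ⊆ Y i := by
  refine ⟨UniformSpace.Completion L, inferInstance, inferInstance, fun n => (↑) ∘ ι n,
    fun n => UniformSpace.Completion.coe_isometry.comp (hι n),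
    fun i => closure ((↑) '' ⋃ n, ι n '' B n i), fun i => ?_, fun i => ?_, fun n i => ?_⟩
  · exact ((hTB i).image (UniformSpace.Completion.uniformContinuous_coe L)).closure
      |>.isCompact_of_isClosed isClosed_closure
  · exact closure_mono (image_mono (iUnion_mono fun n => image_mono (hnested n i)))
  · rw [image_comp]
    exact (image_mono (subset_iUnion (fun n => ι n '' B n i) n)).trans subset_closure

/-- Proposition 4.2 of Wenger's paper: given a sequence of metric spaces `Xₙ`, each equipped
with a nested sequence of subsets `Bₙ¹ ⊆ Bₙ² ⊆ ⋯ ⊆ Xₙ` such that for each `i` the family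
`(Bₙⁱ)ₙ` is uniformly compact (uniformly bounded diameters and, for each `ε > 0`, a uniform
bound `N ε` on the number of `ε`-balls needed to cover each `Bₙⁱ`), there exist a complete
metric space `Z`, a subsequence, isometric embeddings of the corresponding `Xₙ` into `Z`,
and nested compact sets `Y¹ ⊆ Y² ⊆ ⋯ ⊆ Z` containing the images of the `Bₙⁱ`. -/
theorem extended_gromov_compactness
    (X : ℕ → Type u) (dX : ∀ n, MetricSpace (X n))
    (B : ∀ n : ℕ, ℕ → Set (X n))
    (hnested : ∀ n i, B n i ⊆ B n (i + 1))
    (hdiam : ∀ i : ℕ, ∃ D : ℝ, ∀ n, EMetric.diam (B n i) ≤ ENNReal.ofReal D)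
    (hcover : ∀ i : ℕ, ∃ N : ℝ → ℕ, ∀ ε : ℝ, 0 < ε → ∀ n,
      ∃ s : Finset (X n), s.card ≤ N ε ∧ B n i ⊆ ⋃ x ∈ s, Metric.ball x ε) :
    ∃ (Z : Type u) (dZ : MetricSpace Z),
      letI := dZ
      CompleteSpace Z ∧
      ∃ nm : ℕ → ℕ, StrictMono nm ∧
      ∃ φ : ∀ m : ℕ, X (nm m) → Z,
        (∀ m, Isometry (φ m)) ∧
        ∃ Y : ℕ → Set Z,
          (∀ i, IsCompact (Y i)) ∧ (∀ i, Y i ⊆ Y (i + 1)) ∧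
          ∀ m i, φ m '' B (nm m) i ⊆ Y i := by
  choose o ho using fun n =>
    exists_mem_image_inl_of_monotone (Y := PUnit.{u + 1}) (monotone_nat_of_le_succ (hnested n))
  obtain ⟨w, hw, L, _, ι, hι, hTB⟩ := exists_isometry_totallyBounded_of_nonempty
    (fun n => X n ⊕ PUnit.{u + 1}) (fun n i => insert (o n) (Sum.inl '' B n i))
    (fun n i => insert_nonempty _ _)
    (fun n i => insert_subset_insert (image_mono (hnested n i)))
    (fun i => (hdiam i).imp fun D hD n => (ediam_insert_image_inl_le (ho n i)).trans (hD n))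
    (fun i => (hcover i).elim fun N hN => ⟨fun ε => N ε + 1, fun ε hε n => by
      obtain ⟨s, hs, hsub⟩ := hN ε hε n
      obtain ⟨t, ht, htsub⟩ :=
        exists_finset_insert_image_inl_subset_iUnion_ball (o := o n) hε hsub
      exact ⟨t, ht.trans (Nat.add_le_add_right hs 1), htsub⟩⟩)
  obtain ⟨Z, dZ, hZ, φ, hφ, Y, hY, hYmono, hφY⟩ := exists_complete_of_totallyBounded_iUnion
    (fun m => ι m ∘ Sum.inl) (fun m => (hι m).comp isometry_inl) (fun m => B (w m))
    (fun m i => hnested _ i) fun i => (hTB i).subset <| iUnion_mono fun m => by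
      rw [image_comp]
      exact image_mono (subset_insert _ _)
  exact ⟨Z, dZ, hZ, w, hw, φ, hφ, Y, hY, hYmono, hφY⟩
end

section
/- Let (k,α) be either a pair with k ∈ ℕ, k ≥ 2, and α ∈ ℝ, α > 1, or the pair (1,0), and let γ ∈ (0,1). Write F := F_{k,α,γ} and H := H_{k,α,γ}. Let r₀ > 0 and let f : [0,r₀] → [0,∞) be non-decreasing and continuous from the right with f(r₀) < 5^{-(k+α)} F(r₀). Set r_* := sup{ r ∈ [0,r₀] : f(r) ≥ F(r) } (this supremum is attained since f is non-decreasing and right-continuous, and the set is nonempty because f(0) ≥ 0 = F(0)), and assume r_* > 0. Then r_* < r₀/5, and there exists a Lebesgue-measurable subset K ⊆ (r_*, r₀/5) of strictly positive Lebesgue measure such that for every r ∈ K one has f(5r) < 5^{k+α} f(r), f is differentiable at r, and f'(r) < (k+α)·H(f(r)). -/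
/-- The auxiliary function `F_{k,α,γ}` from Wenger's paper: for `k ≥ 2`, `α > 1`,
`F_{k,α,γ}(r) = γ·r^k` for `0 ≤ r ≤ 1` and `γ·r^α` for `r > 1`; for `(k,α) = (1,0)`,
`F_{1,0,γ}(r) = γ·r`. -/
noncomputable def Fgen (k : ℕ) (α γ r : ℝ) : ℝ :=
  if k = 1 then γ * r else if r ≤ 1 then γ * r ^ (k : ℝ) else γ * r ^ α

/-- The auxiliary function `H_{k,α,γ}` from Wenger's paper: for `k ≥ 2`, `α > 1`,
`H_{k,α,γ}(r) = γ^{1/k}·r^{(k-1)/k}` for `0 ≤ r ≤ γ` and `γ^{1/α}·r^{(α-1)/α}` for `r > γ`;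
for `(k,α) = (1,0)`, `H_{1,0,γ}(r) = γ`. -/
noncomputable def Hgen (k : ℕ) (α γ r : ℝ) : ℝ :=
  if k = 1 then γ
  else if r ≤ γ then γ ^ (1 / (k : ℝ)) * r ^ (((k : ℝ) - 1) / (k : ℝ))
  else γ ^ (1 / α) * r ^ ((α - 1) / α)

/-!
To the right of `r_*` we have `f < F`, while `F(r_*) ≤ f(r_*)`. Together with the scaling
`F(5s) ≤ 5^{k+α} F(s)` this forces `r_* < r₀/5` and `f(5r_*) < 5^{k+α} f(r_*)`, and right
continuity of `f` at `5r_*` propagates the latter to all `r` slightly larger than `r_*`.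
The right derivative of `F` at `r_*` is at most `c = (k+α)·H(F(r_*))`, so for `b` slightly
larger than `r_*` the increment of `f` over `[r_*, b]` is less than `c (b - r_*)`. Since the
integral of the derivative of a monotone function is at most its increment, `f' < c ≤ (k+α)·H(f)`
on a subset of `(r_*, b)` of positive measure.
-/

open Set Filter Topology MeasureTheory Real

lemma rpow_one_div_mul_mul_rpow_sub_one_div {γ x p : ℝ} (hγ : 0 < γ) (hx : 0 ≤ x)
    (hp : p ≠ 0) : γ ^ (1 / p) * (γ * x ^ p) ^ ((p - 1) / p) = γ * x ^ (p - 1) := by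
  have h1 : 1 / p + (p - 1) / p = 1 := by field_simp; ring
  have h2 : p * ((p - 1) / p) = p - 1 := by field_simp
  rw [mul_rpow hγ.le (rpow_nonneg hx _), ← rpow_mul hx, h2, ← mul_assoc, ← rpow_add hγ, h1,
    rpow_one]

lemma monotoneOn_const_mul_rpow {γ p : ℝ} (hγ : 0 ≤ γ) (hp : 0 ≤ p) :
    MonotoneOn (fun x : ℝ => γ * x ^ p) (Ici 0) := fun _ hx _ _ hxy =>
  mul_le_mul_of_nonneg_left (rpow_le_rpow hx hxy hp) hγ

theorem MonotoneOn.volume_setOf_deriv_lt_pos {f : ℝ → ℝ} {a b c : ℝ}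
    (hf : MonotoneOn f (Icc a b)) (hab : a < b) (hfab : f b - f a < c * (b - a)) :
    0 < volume {x ∈ Ioo a b | DifferentiableAt ℝ f x ∧ deriv f x < c} := by
  -- otherwise `c ≤ f'` a.e. on `(a, b)`, against `∫ f' ≤ f b - f a`
  by_contra! hzero
  have hnot := measure_eq_zero_iff_ae_notMem.1 (nonpos_iff_eq_zero.1 hzero)
  have hdiff : ∀ᵐ x, x ∈ Ioo a b → DifferentiableAt ℝ f x := by
    filter_upwards [(hf.mono Ioo_subset_Icc_self).ae_differentiableWithinAt_of_mem]
      with x hx hxab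
    exact (hx hxab).differentiableAt (Ioo_mem_nhds hxab.1 hxab.2)
  have hle : (fun _ => c) ≤ᵐ[volume.restrict (Icc a b)] deriv f := by
    rw [← Measure.restrict_congr_set Ioo_ae_eq_Icc, EventuallyLE,
      ae_restrict_iff' measurableSet_Ioo]
    filter_upwards [hnot, hdiff] with x hx hxd hxab
    exact not_lt.1 fun h => hx ⟨hxab, hxd hxab, h⟩
  have hf' : MonotoneOn f (uIcc a b) := by rwa [uIcc_of_le hab.le]
  have hint := intervalIntegral.integral_mono_ae_restrict hab.le intervalIntegrable_const
    hf'.intervalIntegrable_deriv hle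
  rw [intervalIntegral.integral_const, smul_eq_mul] at hint
  have hmem := hf'.intervalIntegral_deriv_mem_uIcc
  rw [uIcc_of_le (sub_nonneg.2 (hf (left_mem_Icc.2 hab.le) (right_mem_Icc.2 hab.le) hab.le))]
    at hmem
  linarith [hmem.2]

lemma eventually_lt_mul_of_continuousWithinAt {f : ℝ → ℝ} {s u t C : ℝ} (ht : 0 < t)
    (hC : 0 ≤ C) (hsu : s < u) (hf : MonotoneOn f (Icc s u))
    (hcont : ContinuousWithinAt f (Ici (t * s)) (t * s)) (hs : f (t * s) < C * f s) :
    ∀ᶠ r in 𝓝[>] s, f (t * r) < C * f r := by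
  have hcomp : ContinuousWithinAt (fun r => f (t * r)) (Ici s) s :=
    hcont.comp (continuous_const_mul t).continuousWithinAt
      fun r hr => mul_le_mul_of_nonneg_left hr ht.le
  filter_upwards [nhdsWithin_mono s Ioi_subset_Ici_self (hcomp.eventually_lt_const hs),
    self_mem_nhdsWithin, nhdsWithin_le_nhds (eventually_lt_nhds hsu)] with r hr hsr hru
  exact hr.trans_le (mul_le_mul_of_nonneg_left
    (hf (left_mem_Icc.2 hsu.le) ⟨hsr.le, hru.le⟩ hsr.le) hC)

namespace Fgen

variable {k : ℕ} {α γ r s t : ℝ}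

lemma of_le_one (hk : k ≠ 1) (hr : r ≤ 1) : Fgen k α γ r = γ * r ^ (k : ℝ) := by
  simp [Fgen, hk, hr]

lemma of_one_le (hk : k ≠ 1) (hr : 1 ≤ r) : Fgen k α γ r = γ * r ^ α := by
  rcases hr.eq_or_lt with rfl | hr
  · simp [Fgen, hk]
  · simp [Fgen, hk, hr.not_ge]

lemma nonneg (hγ : 0 ≤ γ) (hr : 0 ≤ r) : 0 ≤ Fgen k α γ r := by
  unfold Fgen; split_ifs <;> positivity

lemma monotoneOn (hkα : (2 ≤ k ∧ 1 < α) ∨ (k = 1 ∧ α = 0)) (hγ : 0 ≤ γ) :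
    MonotoneOn (Fgen k α γ) (Ici 0) := by
  rcases hkα with ⟨hk, hα⟩ | ⟨rfl, -⟩
  · have hk1 : k ≠ 1 := by omega
    rw [← Icc_union_Ici_eq_Ici zero_le_one]
    refine MonotoneOn.union_right ?_ ?_ (isGreatest_Icc zero_le_one) isLeast_Ici
    · exact ((monotoneOn_const_mul_rpow hγ (Nat.cast_nonneg k)).mono
        Icc_subset_Ici_self).congr fun x hx => (of_le_one hk1 hx.2).symm
    · exact ((monotoneOn_const_mul_rpow hγ (by linarith)).mono
        (Ici_subset_Ici.2 zero_le_one)).congr fun x hx => (of_one_le hk1 hx).symm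
  · intro x _ y _ hxy
    simp only [Fgen, if_true]
    gcongr

lemma mul_le (hkα : (2 ≤ k ∧ 1 < α) ∨ (k = 1 ∧ α = 0)) (hγ : 0 ≤ γ) (ht : 1 ≤ t)
    (hs : 0 ≤ s) : Fgen k α γ (t * s) ≤ t ^ ((k : ℝ) + α) * Fgen k α γ s := by
  rcases hkα with ⟨hk, hα⟩ | ⟨rfl, rfl⟩
  · have hk1 : k ≠ 1 := by omega
    have ht0 : 0 < t := by linarith
    have htk : 1 ≤ t ^ (k : ℝ) := one_le_rpow ht (Nat.cast_nonneg k)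
    have htα : 1 ≤ t ^ α := one_le_rpow ht (by linarith)
    rw [rpow_add ht0]
    rcases le_or_gt (t * s) 1 with hts | hts
    · rw [of_le_one hk1 hts, of_le_one hk1 (by nlinarith), mul_rpow ht0.le hs]
      calc γ * (t ^ (k : ℝ) * s ^ (k : ℝ))
          ≤ t ^ α * (γ * (t ^ (k : ℝ) * s ^ (k : ℝ))) := le_mul_of_one_le_left (by positivity) htα
        _ = _ := by ring
    rw [of_one_le hk1 hts.le, mul_rpow ht0.le hs]
    rcases le_or_gt s 1 with hs1 | hs1
    · -- `s ^ α ≤ 1 ≤ (t * s) ^ k`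
      have hsα : s ^ α ≤ 1 := rpow_le_one hs hs1 (by linarith)
      have htsk : 1 ≤ t ^ (k : ℝ) * s ^ (k : ℝ) := by
        rw [← mul_rpow ht0.le hs]; exact one_le_rpow hts.le (Nat.cast_nonneg k)
      rw [of_le_one hk1 hs1]
      calc γ * (t ^ α * s ^ α) ≤ γ * (t ^ α * (t ^ (k : ℝ) * s ^ (k : ℝ))) := by
            gcongr; linarith
        _ = _ := by ring
    · rw [of_one_le hk1 hs1.le]
      calc γ * (t ^ α * s ^ α) ≤ t ^ (k : ℝ) * (γ * (t ^ α * s ^ α)) :=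
            le_mul_of_one_le_left (by positivity) htk
        _ = _ := by ring
  · simpa [Fgen] using (mul_left_comm γ t s).le

end Fgen

namespace Hgen

variable {k : ℕ} {α γ r : ℝ}

lemma of_le (hk : k ≠ 1) (hr : r ≤ γ) :
    Hgen k α γ r = γ ^ (1 / (k : ℝ)) * r ^ (((k : ℝ) - 1) / (k : ℝ)) := by
  simp [Hgen, hk, hr]

lemma of_ge (hk : 2 ≤ k) (hα : α ≠ 0) (hγ : 0 < γ) (hr : γ ≤ r) :
    Hgen k α γ r = γ ^ (1 / α) * r ^ ((α - 1) / α) := by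
  have hk1 : k ≠ 1 := by omega
  rcases hr.eq_or_lt with rfl | hr
  · have hk0 : (k : ℝ) ≠ 0 := by positivity
    have key (p : ℝ) (hp : p ≠ 0) : γ ^ (1 / p) * γ ^ ((p - 1) / p) = γ := by
      simpa using rpow_one_div_mul_mul_rpow_sub_one_div hγ zero_le_one hp
    rw [of_le hk1 le_rfl, key _ hk0, key _ hα]
  · simp [Hgen, hk1, hr.not_ge]

lemma monotoneOn (hkα : (2 ≤ k ∧ 1 < α) ∨ (k = 1 ∧ α = 0)) (hγ : 0 < γ) :
    MonotoneOn (Hgen k α γ) (Ici 0) := by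
  rcases hkα with ⟨hk, hα⟩ | ⟨rfl, -⟩
  · have hk1 : k ≠ 1 := by omega
    have hkR : (2 : ℝ) ≤ k := by exact_mod_cast hk
    rw [← Icc_union_Ici_eq_Ici hγ.le]
    refine MonotoneOn.union_right ?_ ?_ (isGreatest_Icc hγ.le) isLeast_Ici
    · exact ((monotoneOn_const_mul_rpow (by positivity) (by bound)).mono
        Icc_subset_Ici_self).congr fun x hx => (of_le hk1 hx.2).symm
    · exact ((monotoneOn_const_mul_rpow (by positivity) (by bound)).mono
        (Ici_subset_Ici.2 hγ.le)).congr fun x hx => (of_ge hk (by positivity) hγ hx).symm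
  · intro x _ y _ _
    simp [Hgen]

lemma Fgen_of_le_one (hk : 2 ≤ k) (hγ : 0 < γ) (hr₀ : 0 ≤ r) (hr : r ≤ 1) :
    Hgen k α γ (Fgen k α γ r) = γ * r ^ ((k : ℝ) - 1) := by
  have hk1 : k ≠ 1 := by omega
  have hFγ : Fgen k α γ r ≤ γ := by
    rw [Fgen.of_le_one hk1 hr]
    exact mul_le_of_le_one_right hγ.le (rpow_le_one hr₀ hr (Nat.cast_nonneg k))
  rw [of_le hk1 hFγ, Fgen.of_le_one hk1 hr,
    rpow_one_div_mul_mul_rpow_sub_one_div hγ hr₀ (by positivity)]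

lemma Fgen_of_one_le (hk : 2 ≤ k) (hα : 1 < α) (hγ : 0 < γ) (hr : 1 ≤ r) :
    Hgen k α γ (Fgen k α γ r) = γ * r ^ (α - 1) := by
  have hk1 : k ≠ 1 := by omega
  have hFγ : γ ≤ Fgen k α γ r := by
    rw [Fgen.of_one_le hk1 hr]
    exact le_mul_of_one_le_right hγ.le (one_le_rpow hr (by linarith))
  rw [of_ge hk (by positivity) hγ hFγ, Fgen.of_one_le hk1 hr,
    rpow_one_div_mul_mul_rpow_sub_one_div hγ (by linarith) (by positivity)]

lemma mul_Fgen_le (hkα : (2 ≤ k ∧ 1 < α) ∨ (k = 1 ∧ α = 0)) (hγ : 0 < γ) (hr : 0 ≤ r)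
    {y : ℝ} (hy : Fgen k α γ r ≤ y) :
    ((k : ℝ) + α) * Hgen k α γ (Fgen k α γ r) ≤ ((k : ℝ) + α) * Hgen k α γ y := by
  have hL : 0 ≤ (k : ℝ) + α := by rcases hkα with ⟨-, hα⟩ | ⟨-, rfl⟩ <;> positivity
  have hF : 0 ≤ Fgen k α γ r := Fgen.nonneg hγ.le hr
  exact mul_le_mul_of_nonneg_left (monotoneOn hkα hγ hF (hF.trans hy) hy) hL

end Hgen

namespace Fgen

variable {k : ℕ} {α γ r : ℝ}

lemma exists_hasDerivWithinAt_Ioi_lt (hk : 2 ≤ k) (hα : 1 < α) (hγ : 0 < γ) (hr : 0 < r) :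
    ∃ d < ((k : ℝ) + α) * Hgen k α γ (Fgen k α γ r),
      HasDerivWithinAt (Fgen k α γ) d (Ioi r) r := by
  have hk1 : k ≠ 1 := by omega
  have hkR : (2 : ℝ) ≤ k := by exact_mod_cast hk
  rcases lt_or_ge r 1 with hr1 | hr1
  · have hF : Fgen k α γ =ᶠ[𝓝 r] fun x => γ * x ^ (k : ℝ) :=
      eventually_of_mem (Iio_mem_nhds hr1) fun x hx => of_le_one hk1 hx.le
    refine ⟨γ * ((k : ℝ) * r ^ ((k : ℝ) - 1)), ?_,
      (((hasDerivAt_rpow_const (Or.inl hr.ne')).const_mul γ).congr_of_eventuallyEq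
        hF).hasDerivWithinAt⟩
    rw [Hgen.Fgen_of_le_one hk hγ hr.le hr1.le]
    have : 0 < γ * r ^ ((k : ℝ) - 1) := by positivity
    nlinarith
  · refine ⟨γ * (α * r ^ (α - 1)), ?_,
      ((hasDerivAt_rpow_const (Or.inl hr.ne')).const_mul γ).hasDerivWithinAt.congr
        (fun x hx => of_one_le hk1 (hr1.trans hx.le)) (of_one_le hk1 hr1)⟩
    rw [Hgen.Fgen_of_one_le hk hα hγ hr1]
    have : 0 < γ * r ^ (α - 1) := by positivity
    nlinarith

lemma eventually_sub_le (hkα : (2 ≤ k ∧ 1 < α) ∨ (k = 1 ∧ α = 0)) (hγ : 0 < γ)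
    (hr : 0 < r) :
    ∀ᶠ x in 𝓝[>] r, Fgen k α γ x - Fgen k α γ r ≤
      ((k : ℝ) + α) * Hgen k α γ (Fgen k α γ r) * (x - r) := by
  rcases hkα with ⟨hk, hα⟩ | ⟨rfl, rfl⟩
  · obtain ⟨d, hd, hF⟩ := exists_hasDerivWithinAt_Ioi_lt hk hα hγ hr
    filter_upwards [hF.limsup_slope_le' (lt_irrefl r) hd, self_mem_nhdsWithin] with x hslope hx
    rw [slope_def_field, div_lt_iff₀ (sub_pos.2 hx)] at hslope
    exact hslope.le
  · refine Eventually.of_forall fun x => ?_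
    simp only [Fgen, Hgen, if_true]
    push_cast
    linarith

end Fgen

lemma lt_div_five_of_Fgen_le {k : ℕ} {α γ r₀ s : ℝ} {f : ℝ → ℝ}
    (hkα : (2 ≤ k ∧ 1 < α) ∨ (k = 1 ∧ α = 0)) (hγ : 0 ≤ γ) (hr₀ : 0 < r₀)
    (hmono : MonotoneOn f (Icc 0 r₀))
    (hfr₀ : f r₀ < (5 : ℝ) ^ (-((k : ℝ) + α)) * Fgen k α γ r₀)
    (hs : s ∈ Icc 0 r₀) (hFs : Fgen k α γ s ≤ f s) : s < r₀ / 5 := by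
  by_contra! hs5
  have hscale : Fgen k α γ r₀ ≤ (5 : ℝ) ^ ((k : ℝ) + α) * Fgen k α γ (r₀ / 5) := by
    simpa [mul_div_cancel₀] using
      Fgen.mul_le hkα hγ (t := 5) (by norm_num) (by positivity : 0 ≤ r₀ / 5)
  have hFf : Fgen k α γ (r₀ / 5) ≤ f r₀ := calc
    Fgen k α γ (r₀ / 5) ≤ Fgen k α γ s :=
      Fgen.monotoneOn hkα hγ (mem_Ici.2 (by positivity)) hs.1 hs5
    _ ≤ f s := hFs
    _ ≤ f r₀ := hmono hs (right_mem_Icc.2 hr₀.le) hs.2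
  have h5 : (5 : ℝ) ^ (-((k : ℝ) + α)) * (5 : ℝ) ^ ((k : ℝ) + α) = 1 := by
    rw [rpow_neg (by norm_num), inv_mul_cancel₀ (by positivity)]
  have := mul_le_mul_of_nonneg_left hscale
    (by positivity : (0 : ℝ) ≤ (5 : ℝ) ^ (-((k : ℝ) + α)))
  rw [← mul_assoc, h5, one_mul] at this
  linarith

theorem analytic_lemma_general (k : ℕ) (α : ℝ)
    (hkα : (2 ≤ k ∧ 1 < α) ∨ (k = 1 ∧ α = 0))
    (γ : ℝ) (hγ : γ ∈ Set.Ioo (0 : ℝ) 1)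
    (r₀ : ℝ) (hr₀ : 0 < r₀) (f : ℝ → ℝ)
    (hmono : MonotoneOn f (Set.Icc 0 r₀))
    (hright : ∀ r ∈ Set.Ico (0 : ℝ) r₀, ContinuousWithinAt f (Set.Ici r) r)
    (hfr₀ : f r₀ < (5 : ℝ) ^ (-((k : ℝ) + α)) * Fgen k α γ r₀)
    (rstar : ℝ)
    (hrstar : IsGreatest {r | r ∈ Set.Icc (0 : ℝ) r₀ ∧ Fgen k α γ r ≤ f r} rstar)
    (hrstar_pos : 0 < rstar) :
    rstar < r₀ / 5 ∧
      ∃ K ⊆ Set.Ioo rstar (r₀ / 5), MeasurableSet K ∧ 0 < MeasureTheory.volume K ∧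
        ∀ r ∈ K, f (5 * r) < (5 : ℝ) ^ ((k : ℝ) + α) * f r ∧
          DifferentiableAt ℝ f r ∧ deriv f r < ((k : ℝ) + α) * Hgen k α γ (f r) := by
  obtain ⟨hγ, -⟩ := hγ
  obtain ⟨⟨hrstar_mem, hF_le_f⟩, hmax⟩ := hrstar
  have hf_lt_F (r : ℝ) (hr : r ∈ Ioc rstar r₀) : f r < Fgen k α γ r :=
    lt_of_not_ge fun h => hr.1.not_ge (hmax ⟨⟨hrstar_pos.le.trans hr.1.le, hr.2⟩, h⟩)
  have hrstar_lt := lt_div_five_of_Fgen_le hkα hγ.le hr₀ hmono hfr₀ hrstar_mem hF_le_f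
  have hdoubling : f (5 * rstar) < (5 : ℝ) ^ ((k : ℝ) + α) * f rstar := calc
    f (5 * rstar) < Fgen k α γ (5 * rstar) := hf_lt_F _ ⟨by linarith, by linarith⟩
    _ ≤ (5 : ℝ) ^ ((k : ℝ) + α) * Fgen k α γ rstar :=
      Fgen.mul_le hkα hγ.le (by norm_num) hrstar_pos.le
    _ ≤ (5 : ℝ) ^ ((k : ℝ) + α) * f rstar := by gcongr
  obtain ⟨u, hu, hu_doubling⟩ := mem_nhdsGT_iff_exists_Ioo_subset.1
    (eventually_lt_mul_of_continuousWithinAt (by norm_num) (by positivity)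
      (by linarith : rstar < r₀) (hmono.mono (Icc_subset_Icc hrstar_mem.1 le_rfl))
      (hright _ ⟨by linarith, by linarith⟩) hdoubling)
  set c := ((k : ℝ) + α) * Hgen k α γ (Fgen k α γ rstar)
  obtain ⟨b, hb_slope, hbu, hb_lt, hrb⟩ := ((Fgen.eventually_sub_le hkα hγ hrstar_pos).and
    ((eventually_nhdsWithin_of_eventually_nhds (eventually_lt_nhds (mem_Ioi.1 hu))).and
    ((eventually_nhdsWithin_of_eventually_nhds (eventually_lt_nhds hrstar_lt)).and
    self_mem_nhdsWithin))).exists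
  have hfb : f b - f rstar < c * (b - rstar) := by
    linarith [hf_lt_F b ⟨hrb, by linarith⟩]
  refine ⟨hrstar_lt, {r ∈ Ioo rstar b | DifferentiableAt ℝ f r ∧ deriv f r < c},
    fun r hr => ⟨hr.1.1, hr.1.2.trans hb_lt⟩,
    measurableSet_Ioo.inter ((measurableSet_of_differentiableAt ℝ f).inter
      (measurableSet_lt (measurable_deriv f) measurable_const)),
    (hmono.mono (Icc_subset_Icc hrstar_mem.1 (by linarith))).volume_setOf_deriv_lt_pos hrb
      hfb, fun r ⟨hr, hdiff, hderiv⟩ =>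
        ⟨hu_doubling ⟨hr.1, hr.2.trans hbu⟩, hdiff, hderiv.trans_le ?_⟩⟩
  exact Hgen.mul_Fgen_le hkα hγ hrstar_mem.1
    (hF_le_f.trans (hmono hrstar_mem ⟨by linarith [hr.1], by linarith [hr.2]⟩ hr.1.le))

theorem analytic_lemma (k : ℕ) (α : ℝ)
    (hkα : (2 ≤ k ∧ 1 < α) ∨ (k = 1 ∧ α = 0))
    (γ : ℝ) (hγ : γ ∈ Set.Ioo (0 : ℝ) 1)
    (r₀ : ℝ) (hr₀ : 0 < r₀) (f : ℝ → ℝ)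
    (hmono : MonotoneOn f (Set.Icc 0 r₀))
    (hnonneg : ∀ r ∈ Set.Icc (0 : ℝ) r₀, 0 ≤ f r)
    (hright : ∀ r ∈ Set.Ico (0 : ℝ) r₀, ContinuousWithinAt f (Set.Ici r) r)
    (hfr₀ : f r₀ < (5 : ℝ) ^ (-((k : ℝ) + α)) * Fgen k α γ r₀)
    (rstar : ℝ)
    (hrstar : IsGreatest {r | r ∈ Set.Icc (0 : ℝ) r₀ ∧ Fgen k α γ r ≤ f r} rstar)
    (hrstar_pos : 0 < rstar) :
    rstar < r₀ / 5 ∧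
      ∃ K ⊆ Set.Ioo rstar (r₀ / 5), MeasurableSet K ∧ 0 < MeasureTheory.volume K ∧
        ∀ r ∈ K, f (5 * r) < (5 : ℝ) ^ ((k : ℝ) + α) * f r ∧
          DifferentiableAt ℝ f r ∧ deriv f r < ((k : ℝ) + α) * Hgen k α γ (f r) :=
  analytic_lemma_general k α hkα γ hγ r₀ hr₀ f hmono hright hfr₀ rstar hrstar hrstar_pos
end

section
/- Let k ∈ ℕ with k ≥ 2, let α ∈ ℝ with α > 1, and let λ, δ ∈ (0,1]. Let L > 0 and let (t_i)_{i ∈ ℕ} be a sequence of reals with 0 ≤ t_i < δ·L for every i, such that the series ∑_{i=1}^∞ t_i converges and λ·∑_{i=1}^∞ t_i ≤ L. Then ∑_{i=1}^∞ I_{k,α}(t_i) ≤ (2(1+δλ)/λ)·max{(2δ)^{1/(k-1)}, (2δ)^{1/(α-1)}}·I_{k,α}(L). -/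
/-- The isoperimetric profile function `I_{k,α}` from Wenger's paper (for `k ≥ 2`, `α > 1`):
`I_{k,α}(r) = r^{k/(k-1)}` for `0 ≤ r ≤ 1` and `r^{α/(α-1)}` for `r > 1`. -/
noncomputable def Iaux (k : ℕ) (α r : ℝ) : ℝ :=
  if r ≤ 1 then r ^ ((k : ℝ) / ((k : ℝ) - 1)) else r ^ (α / (α - 1))

/-!
Write `I_{k,α}(r) = r · s(r)` with `s(r) = r^{1/(k-1)}` for `r ≤ 1` and `s(r) = r^{1/(α-1)}` for
`r > 1`. The slope `s` is nondecreasing, so `∑ I(tᵢ) ≤ (∑ tᵢ) · s(δL) ≤ (L/λ) · s(δL)`, and a case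
analysis on the position of `δL` and `L` relative to `1` gives `s(δL) ≤ max(δ^{1/(k-1)}, δ^{1/(α-1)}) · s(L)`.
Hence `∑ I(tᵢ) ≤ max(δ^{1/(k-1)}, δ^{1/(α-1)}) · I(L) / λ`, which is stronger than the claimed bound.
-/

open Set

noncomputable def profileSlope (a b r : ℝ) : ℝ :=
  if r ≤ 1 then r ^ a else r ^ b

lemma rpow_div_sub_one_eq_mul {r e : ℝ} (hr : 0 ≤ r) (he : 1 < e) :
    r ^ (e / (e - 1)) = r * r ^ (1 / (e - 1)) := by
  have he' : 0 < e - 1 := sub_pos.mpr he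
  have hsplit : e / (e - 1) = 1 + 1 / (e - 1) := by field_simp; ring
  rw [hsplit, Real.rpow_add' hr (by positivity), Real.rpow_one]

lemma Iaux_eq_mul_profileSlope {k : ℕ} (hk : 1 < k) {α r : ℝ} (hα : 1 < α) (hr : 0 ≤ r) :
    Iaux k α r = r * profileSlope (1 / ((k : ℝ) - 1)) (1 / (α - 1)) r := by
  unfold Iaux profileSlope
  split_ifs
  · exact rpow_div_sub_one_eq_mul hr (Nat.one_lt_cast.mpr hk)
  · exact rpow_div_sub_one_eq_mul hr hα

lemma profileSlope_nonneg {a b r : ℝ} (hr : 0 ≤ r) : 0 ≤ profileSlope a b r := by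
  unfold profileSlope
  split_ifs <;> exact Real.rpow_nonneg hr _

lemma profileSlope_monotoneOn {a b : ℝ} (ha : 0 ≤ a) (hb : 0 ≤ b) :
    MonotoneOn (profileSlope a b) (Ici 0) := by
  intro x hx y _ hxy
  unfold profileSlope
  split_ifs with hx1 hy1 hy1
  · exact Real.rpow_le_rpow hx hxy ha
  · exact (Real.rpow_le_one hx hx1 ha).trans (Real.one_le_rpow (not_le.mp hy1).le hb)
  · exact absurd (hxy.trans hy1) hx1
  · exact Real.rpow_le_rpow hx hxy hb

lemma profileSlope_mul_le {a b δ L : ℝ} (hb : 0 ≤ b) (hδ0 : 0 ≤ δ) (hδ1 : δ ≤ 1) (hL : 0 ≤ L) :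
    profileSlope a b (δ * L) ≤ max (δ ^ a) (δ ^ b) * profileSlope a b L := by
  have hδL : δ * L ≤ L := mul_le_of_le_one_left hL hδ1
  unfold profileSlope
  split_ifs with hδL1 hL1 hL1
  · rw [Real.mul_rpow hδ0 hL]
    gcongr
    exact le_max_left _ _
  · -- the only case where both exponents meet: `δL ≤ 1 < L`
    rcases le_total a b with hab | hba
    · calc (δ * L) ^ a = δ ^ a * L ^ a := Real.mul_rpow hδ0 hL
        _ ≤ max (δ ^ a) (δ ^ b) * L ^ b := by
          gcongr
          · exact le_max_left _ _
          · exact (not_le.mp hL1).le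
    · calc (δ * L) ^ a ≤ (δ * L) ^ b :=
            Real.rpow_le_rpow_of_exponent_ge' (by positivity) hδL1 hb hba
        _ = δ ^ b * L ^ b := Real.mul_rpow hδ0 hL
        _ ≤ max (δ ^ a) (δ ^ b) * L ^ b := by
          gcongr
          exact le_max_right _ _
  · exact absurd (hδL.trans hL1) hδL1
  · rw [Real.mul_rpow hδ0 hL]
    gcongr
    exact le_max_right _ _

section MonotoneSlope

variable {ι : Type*} {t : ι → ℝ} {g : ℝ → ℝ} {c : ℝ}

lemma mul_comp_le_mul_of_monotoneOn (hg : MonotoneOn g (Ici 0)) (ht0 : ∀ i, 0 ≤ t i)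
    (htc : ∀ i, t i ≤ c) (i : ι) : t i * g (t i) ≤ t i * g c :=
  mul_le_mul_of_nonneg_left (hg (ht0 i) ((ht0 i).trans (htc i)) (htc i)) (ht0 i)

lemma summable_mul_comp_of_monotoneOn (hg : MonotoneOn g (Ici 0)) (hg0 : 0 ≤ g 0)
    (ht0 : ∀ i, 0 ≤ t i) (htc : ∀ i, t i ≤ c) (ht : Summable t) :
    Summable fun i => t i * g (t i) :=
  (ht.mul_right (g c)).of_nonneg_of_le
    (fun i => mul_nonneg (ht0 i) (hg0.trans (hg self_mem_Ici (ht0 i) (ht0 i))))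
    (mul_comp_le_mul_of_monotoneOn hg ht0 htc)

lemma tsum_mul_comp_le_of_monotoneOn (hg : MonotoneOn g (Ici 0)) (hg0 : 0 ≤ g 0)
    (ht0 : ∀ i, 0 ≤ t i) (htc : ∀ i, t i ≤ c) (ht : Summable t) :
    ∑' i, t i * g (t i) ≤ (∑' i, t i) * g c := by
  rw [← tsum_mul_right]
  exact (summable_mul_comp_of_monotoneOn hg hg0 ht0 htc ht).tsum_le_tsum
    (mul_comp_le_mul_of_monotoneOn hg ht0 htc) (ht.mul_right _)

end MonotoneSlope

theorem power_sum_lemma (k : ℕ) (hk : 2 ≤ k) (α : ℝ) (hα : 1 < α)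
    (lam δ : ℝ) (hlam : lam ∈ Set.Ioc (0 : ℝ) 1) (hδ : δ ∈ Set.Ioc (0 : ℝ) 1)
    (L : ℝ) (hL : 0 < L) (t : ℕ → ℝ)
    (ht0 : ∀ i, 0 ≤ t i) (htδ : ∀ i, t i < δ * L)
    (hsum : Summable t) (hle : lam * ∑' i, t i ≤ L) :
    Summable (fun i => Iaux k α (t i)) ∧
    ∑' i, Iaux k α (t i) ≤
      2 * (1 + δ * lam) / lam *
        max ((2 * δ) ^ (1 / ((k : ℝ) - 1))) ((2 * δ) ^ (1 / (α - 1))) * Iaux k α L := by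
  obtain ⟨hlam0, -⟩ := hlam
  obtain ⟨hδ0, hδ1⟩ := hδ
  set a := 1 / ((k : ℝ) - 1)
  set b := 1 / (α - 1)
  have ha : 0 ≤ a := one_div_nonneg.mpr (sub_nonneg.mpr (by exact_mod_cast (by omega : 1 ≤ k)))
  have hb : 0 ≤ b := one_div_nonneg.mpr (sub_nonneg.mpr hα.le)
  have hs := profileSlope_monotoneOn ha hb
  have hs0 : 0 ≤ profileSlope a b 0 := profileSlope_nonneg le_rfl
  have htδ' : ∀ i, t i ≤ δ * L := fun i => (htδ i).le
  have hI : (fun i => Iaux k α (t i)) = fun i => t i * profileSlope a b (t i) :=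
    funext fun i => Iaux_eq_mul_profileSlope hk hα (ht0 i)
  refine ⟨hI ▸ summable_mul_comp_of_monotoneOn hs hs0 ht0 htδ' hsum, ?_⟩
  have hIL : Iaux k α L = L * profileSlope a b L := Iaux_eq_mul_profileSlope hk hα hL.le
  have hmax : max (δ ^ a) (δ ^ b) ≤ max ((2 * δ) ^ a) ((2 * δ) ^ b) := by
    gcongr <;> linarith
  calc ∑' i, Iaux k α (t i) = ∑' i, t i * profileSlope a b (t i) := congrArg tsum hI
    _ ≤ (∑' i, t i) * profileSlope a b (δ * L) :=
      tsum_mul_comp_le_of_monotoneOn hs hs0 ht0 htδ' hsum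
    _ ≤ L / lam * (max (δ ^ a) (δ ^ b) * profileSlope a b L) := by
      gcongr
      · exact profileSlope_nonneg (by positivity)
      · exact (le_div_iff₀' hlam0).mpr hle
      · exact profileSlope_mul_le hb hδ0.le hδ1 hL.le
    _ = 1 / lam * max (δ ^ a) (δ ^ b) * Iaux k α L := by
      rw [hIL]
      field_simp
    _ ≤ 2 * (1 + δ * lam) / lam * max ((2 * δ) ^ a) ((2 * δ) ^ b) * Iaux k α L := by
      have hIL0 : 0 ≤ Iaux k α L := hIL ▸ mul_nonneg hL.le (profileSlope_nonneg hL.le)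
      gcongr
      nlinarith [mul_pos hδ0 hlam0]
end

section
/- Let k ∈ ℕ with k ≥ 2, let α ∈ ℝ with α > 1, and let γ ∈ (0,∞). Then for every ν ≥ 0 and every r ≥ 0, min{(γν)^{1/k}, (γν)^{1/α}}·r ≤ G_{k,α}(ν·F_{k,α,γ}(r)) ≤ max{(γν)^{1/k}, (γν)^{1/α}}·r. -/
/-- The auxiliary function `F_{k,α,γ}` from Wenger's paper (case `k ≥ 2`, `α > 1`):
`F_{k,α,γ}(r) = γ·r^k` for `0 ≤ r ≤ 1` and `γ·r^α` for `r > 1`. -/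
noncomputable def Faux (k : ℕ) (α γ r : ℝ) : ℝ :=
  if r ≤ 1 then γ * r ^ (k : ℝ) else γ * r ^ α

/-- The auxiliary function `G_{k,α}` from Wenger's paper:
`G_{k,α}(r) = r^{1/k}` for `0 ≤ r ≤ 1` and `r^{1/α}` for `r > 1`. -/
noncomputable def Gaux (k : ℕ) (α r : ℝ) : ℝ :=
  if r ≤ 1 then r ^ (1 / (k : ℝ)) else r ^ (1 / α)


/-!
Write `c = γν` and `φ = F_{k,α,1}`, so that `ν F_{k,α,γ}(r) = c φ(r)` and `G(φ(r)) = r`. Comparing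
`y^{1/k}` with `y^{1/α}` on either side of `1` shows that `G(y)` is the minimum of the two powers
when `k ≤ α` and their maximum when `α ≤ k`. Since `(cy)^s = c^s y^s`, the minimum (or maximum) of
the powers of `cy` lies between `min(c^{1/k}, c^{1/α})` and `max(c^{1/k}, c^{1/α})` times the
corresponding one for `y`; taking `y = φ(r)` gives the claim.
-/

section MinMaxMul

variable {R : Type*} [CommSemiring R] [LinearOrder R] [IsOrderedRing R] {a b x y : R}

lemma min_mul_min_le_min_mul_mul (ha : 0 ≤ a) (hb : 0 ≤ b) (hx : 0 ≤ x) (hy : 0 ≤ y) :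
    min a b * min x y ≤ min (a * x) (b * y) :=
  le_min (mul_le_mul (min_le_left _ _) (min_le_left _ _) (le_min hx hy) ha)
    (mul_le_mul (min_le_right _ _) (min_le_right _ _) (le_min hx hy) hb)

lemma min_mul_mul_le_max_mul_min (hx : 0 ≤ x) (hy : 0 ≤ y) :
    min (a * x) (b * y) ≤ max a b * min x y := by
  rcases min_cases x y with ⟨h, -⟩ | ⟨h, -⟩ <;> rw [h]
  · exact (min_le_left _ _).trans (mul_le_mul_of_nonneg_right (le_max_left _ _) hx)
  · exact (min_le_right _ _).trans (mul_le_mul_of_nonneg_right (le_max_right _ _) hy)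

lemma min_mul_max_le_max_mul_mul (hx : 0 ≤ x) (hy : 0 ≤ y) :
    min a b * max x y ≤ max (a * x) (b * y) := by
  rcases max_cases x y with ⟨h, -⟩ | ⟨h, -⟩ <;> rw [h]
  · exact (mul_le_mul_of_nonneg_right (min_le_left _ _) hx).trans (le_max_left _ _)
  · exact (mul_le_mul_of_nonneg_right (min_le_right _ _) hy).trans (le_max_right _ _)

lemma max_mul_mul_le_max_mul_max_of_nonneg (ha : 0 ≤ a) (hx : 0 ≤ x) (hy : 0 ≤ y) :
    max (a * x) (b * y) ≤ max a b * max x y :=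
  max_le (mul_le_mul (le_max_left _ _) (le_max_left _ _) hx (ha.trans (le_max_left _ _)))
    (mul_le_mul (le_max_right _ _) (le_max_right _ _) hy (ha.trans (le_max_left _ _)))

end MinMaxMul

section AuxFunctions

open Real

variable {k : ℕ} {α : ℝ}

lemma Faux_eq_mul_Faux_one (γ r : ℝ) : Faux k α γ r = γ * Faux k α 1 r := by
  unfold Faux
  split_ifs <;> ring

lemma Gaux_Faux_one (hk : 0 < k) (hα : 0 < α) {r : ℝ} (hr : 0 ≤ r) :
    Gaux k α (Faux k α 1 r) = r := by
  have hk' : (0 : ℝ) < k := Nat.cast_pos.mpr hk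
  unfold Faux Gaux
  rcases le_or_gt r 1 with hr1 | hr1
  · have : r ^ (k : ℝ) ≤ 1 := rpow_le_one hr hr1 hk'.le
    simp only [if_pos hr1, one_mul, if_pos this, rpow_rpow_inv hr hk'.ne', one_div]
  · have : ¬ r ^ α ≤ 1 := (one_lt_rpow hr1 hα).not_ge
    simp only [if_neg hr1.not_ge, one_mul, if_neg this, rpow_rpow_inv hr hα.ne', one_div]

lemma Gaux_eq_min (hk : 0 < k) (hkα : (k : ℝ) ≤ α) {y : ℝ} (hy : 0 ≤ y) :
    Gaux k α y = min (y ^ (1 / (k : ℝ))) (y ^ (1 / α)) := by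
  have hk' : (0 : ℝ) < k := Nat.cast_pos.mpr hk
  have hexp : 1 / α ≤ 1 / (k : ℝ) := one_div_le_one_div_of_le hk' hkα
  unfold Gaux
  split_ifs with hy1
  · have hα₀ : 0 ≤ 1 / α := one_div_nonneg.mpr (hk'.le.trans hkα)
    exact (min_eq_left (rpow_le_rpow_of_exponent_ge' hy hy1 hα₀ hexp)).symm
  · exact (min_eq_right (rpow_le_rpow_of_exponent_le (not_le.mp hy1).le hexp)).symm

lemma Gaux_eq_max (hα : 0 < α) (hαk : α ≤ k) {y : ℝ} (hy : 0 ≤ y) :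
    Gaux k α y = max (y ^ (1 / (k : ℝ))) (y ^ (1 / α)) := by
  have hexp : 1 / (k : ℝ) ≤ 1 / α := one_div_le_one_div_of_le hα hαk
  unfold Gaux
  split_ifs with hy1
  · exact (max_eq_left (rpow_le_rpow_of_exponent_ge' hy hy1 (by positivity) hexp)).symm
  · exact (max_eq_right (rpow_le_rpow_of_exponent_le (not_le.mp hy1).le hexp)).symm

lemma Gaux_mul_bounds (hk : 0 < k) (hα : 0 < α) {c y : ℝ} (hc : 0 ≤ c) (hy : 0 ≤ y) :
    min (c ^ (1 / (k : ℝ))) (c ^ (1 / α)) * Gaux k α y ≤ Gaux k α (c * y) ∧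
      Gaux k α (c * y) ≤ max (c ^ (1 / (k : ℝ))) (c ^ (1 / α)) * Gaux k α y := by
  have hcy := mul_nonneg hc hy
  rcases le_total (k : ℝ) α with hkα | hαk
  · simp only [Gaux_eq_min hk hkα hy, Gaux_eq_min hk hkα hcy, mul_rpow hc hy]
    exact ⟨min_mul_min_le_min_mul_mul (by positivity) (by positivity) (by positivity)
      (by positivity), min_mul_mul_le_max_mul_min (by positivity) (by positivity)⟩
  · simp only [Gaux_eq_max hα hαk hy, Gaux_eq_max hα hαk hcy, mul_rpow hc hy]
    exact ⟨min_mul_max_le_max_mul_mul (by positivity) (by positivity),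
      max_mul_mul_le_max_mul_max_of_nonneg (by positivity) (by positivity) (by positivity)⟩

end AuxFunctions

theorem G_of_F_scaling (k : ℕ) (hk : 2 ≤ k) (α : ℝ) (hα : 1 < α) (γ : ℝ) (hγ : 0 < γ) :
    ∀ ν r : ℝ, 0 ≤ ν → 0 ≤ r →
      min ((γ * ν) ^ (1 / (k : ℝ))) ((γ * ν) ^ (1 / α)) * r ≤ Gaux k α (ν * Faux k α γ r) ∧
      Gaux k α (ν * Faux k α γ r) ≤ max ((γ * ν) ^ (1 / (k : ℝ))) ((γ * ν) ^ (1 / α)) * r := by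
  intro ν r hν hr
  have hk0 : 0 < k := by omega
  have hα0 : 0 < α := by linarith
  have hφ : 0 ≤ Faux k α 1 r := by
    unfold Faux; split_ifs <;> positivity
  rw [Faux_eq_mul_Faux_one, ← mul_assoc, mul_comm ν γ]
  simpa only [Gaux_Faux_one hk0 hα0 hr] using
    Gaux_mul_bounds hk0 hα0 (mul_nonneg hγ.le hν) hφ
end

section
/- Let k ∈ ℕ with k ≥ 2, let α ∈ ℝ with α > 1, and let γ ∈ (0,1). Then for every real μ with 1 ≤ μ ≤ 1/γ and every r ≥ 0, I_{k,α}(μ·H_{k,α,γ}(r)) ≤ μ·max{(μγ)^{1/(k-1)}, (μγ)^{1/(α-1)}}·r. -/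
/-- The auxiliary function `H_{k,α,γ}` from Wenger's paper (case `k ≥ 2`, `α > 1`):
`H_{k,α,γ}(r) = γ^{1/k}·r^{(k-1)/k}` for `0 ≤ r ≤ γ` and `γ^{1/α}·r^{(α-1)/α}` for `r > γ`. -/
noncomputable def Haux (k : ℕ) (α γ r : ℝ) : ℝ :=
  if r ≤ γ then γ ^ (1 / (k : ℝ)) * r ^ (((k : ℝ) - 1) / (k : ℝ))
  else γ ^ (1 / α) * r ^ ((α - 1) / α)

open Real

noncomputable def HauxBranch (p γ r : ℝ) : ℝ :=
  γ ^ (1 / p) * r ^ ((p - 1) / p)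

section HauxBranch

variable {p q γ μ r : ℝ}

lemma HauxBranch_eq (hp : p ≠ 0) (hγ : 0 < γ) (hr : 0 ≤ r) :
    HauxBranch p γ r = γ * (r / γ) ^ (1 - 1 / p) := by
  rw [HauxBranch, div_rpow hr hγ.le, sub_div, div_self hp]
  calc γ ^ (1 / p) * r ^ (1 - 1 / p)
      = γ ^ (1 / p) * γ ^ (1 - 1 / p) * (r ^ (1 - 1 / p) / γ ^ (1 - 1 / p)) := by field_simp
    _ = γ * (r ^ (1 - 1 / p) / γ ^ (1 - 1 / p)) := by
      rw [← rpow_add hγ, add_sub_cancel, rpow_one]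

lemma HauxBranch_nonneg (hγ : 0 ≤ γ) (hr : 0 ≤ r) : 0 ≤ HauxBranch p γ r := by
  unfold HauxBranch
  positivity

lemma HauxBranch_le_self (hp : 1 ≤ p) (hγ : 0 < γ) (hr : 0 ≤ r) (hrγ : r ≤ γ) :
    HauxBranch p γ r ≤ γ := by
  rw [HauxBranch_eq (by positivity) hγ hr]
  have hexp : 0 ≤ 1 - 1 / p := by
    rw [sub_nonneg]
    exact div_le_one_of_le₀ hp (by positivity)
  have hle : (r / γ) ^ (1 - 1 / p) ≤ 1 :=
    rpow_le_one (by positivity) ((div_le_one hγ).2 hrγ) hexp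
  nlinarith

lemma HauxBranch_le_HauxBranch (hp : 0 < p) (hpq : p ≤ q) (hγ : 0 < γ) (hγr : γ ≤ r) :
    HauxBranch p γ r ≤ HauxBranch q γ r := by
  have hr : 0 ≤ r := hγ.le.trans hγr
  rw [HauxBranch_eq hp.ne' hγ hr, HauxBranch_eq (by linarith) hγ hr]
  gcongr
  exact (one_le_div hγ).2 hγr

lemma rpow_mul_HauxBranch (hp : 1 < p) (hμ : 0 ≤ μ) (hγ : 0 < γ) (hr : 0 ≤ r) :
    (μ * HauxBranch p γ r) ^ (p / (p - 1)) = μ * (μ * γ) ^ (1 / (p - 1)) * r := by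
  have hp0 : p ≠ 0 := by linarith
  have hp1 : p - 1 ≠ 0 := by linarith
  have hconj : (1 - 1 / p) * (p / (p - 1)) = 1 := by field_simp
  have hsplit : p / (p - 1) = 1 + 1 / (p - 1) := by field_simp; ring
  rw [HauxBranch_eq hp0 hγ hr, ← mul_assoc, mul_rpow (by positivity) (by positivity),
    ← rpow_mul (by positivity), hconj, rpow_one, hsplit,
    rpow_add' (by positivity) (by rw [← hsplit]; positivity), rpow_one]
  field_simp

end HauxBranch

lemma Haux_of_le {k : ℕ} {α γ r : ℝ} (h : r ≤ γ) : Haux k α γ r = HauxBranch k γ r :=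
  if_pos h

lemma Haux_of_lt {k : ℕ} {α γ r : ℝ} (h : γ < r) : Haux k α γ r = HauxBranch α γ r :=
  if_neg h.not_ge

lemma div_sub_one_le_div_sub_one {p q : ℝ} (hp : 1 < p) (hpq : p ≤ q) :
    q / (q - 1) ≤ p / (p - 1) := by
  rw [div_le_div_iff₀ (by linarith) (by linarith)]
  linarith

lemma Iaux_mul_Haux_le_max {k : ℕ} {α γ μ r : ℝ} (hk : 1 < (k : ℝ)) (hα : 1 < α)
    (hγ : 0 < γ) (hμ : 0 ≤ μ) (hμγ : μ * γ ≤ 1) (hr : 0 ≤ r) :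
    Iaux k α (μ * Haux k α γ r) ≤
      max ((μ * HauxBranch k γ r) ^ ((k : ℝ) / ((k : ℝ) - 1)))
        ((μ * HauxBranch α γ r) ^ (α / (α - 1))) := by
  rcases le_or_gt r γ with hrγ | hγr
  · have hle : μ * HauxBranch k γ r ≤ 1 :=
      (mul_le_mul_of_nonneg_left (HauxBranch_le_self hk.le hγ hr hrγ) hμ).trans hμγ
    rw [Iaux, Haux_of_le hrγ, if_pos hle]
    exact le_max_left _ _
  have hnonneg : 0 ≤ μ * HauxBranch α γ r := mul_nonneg hμ (HauxBranch_nonneg hγ.le hr)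
  rw [Iaux, Haux_of_lt hγr]
  split_ifs with hle
  · rcases le_total α k with hαk | hkα
    · refine le_max_of_le_left (rpow_le_rpow hnonneg ?_ (by positivity))
      exact mul_le_mul_of_nonneg_left
        (HauxBranch_le_HauxBranch (by linarith) hαk hγ hγr.le) hμ
    · refine le_max_of_le_right (rpow_le_rpow_of_exponent_ge' hnonneg hle
        (by positivity) (div_sub_one_le_div_sub_one hk hkα))
  · exact le_max_right _ _

theorem I_of_H_bound (k : ℕ) (hk : 2 ≤ k) (α : ℝ) (hα : 1 < α) (γ : ℝ)
    (hγ : γ ∈ Set.Ioo (0 : ℝ) 1) :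
    ∀ μ : ℝ, 1 ≤ μ → μ ≤ 1 / γ → ∀ r : ℝ, 0 ≤ r →
      Iaux k α (μ * Haux k α γ r) ≤
        μ * max ((μ * γ) ^ (1 / ((k : ℝ) - 1))) ((μ * γ) ^ (1 / (α - 1))) * r := by
  intro μ hμ hμγ r hr
  have hk' : 1 < (k : ℝ) := by exact_mod_cast hk
  have hμ0 : 0 ≤ μ := by linarith
  have hμγ' : μ * γ ≤ 1 := (le_div_iff₀ hγ.1).1 hμγ
  have hbound := Iaux_mul_Haux_le_max hk' hα hγ.1 hμ0 hμγ' hr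
  rwa [rpow_mul_HauxBranch hk' hμ0 hγ.1 hr, rpow_mul_HauxBranch hα hμ0 hγ.1 hr,
    ← max_mul_of_nonneg _ _ hr, ← mul_max_of_nonneg _ _ hμ0] at hbound
end

section
/- Let k ∈ ℕ with k ≥ 2, let α ∈ ℝ with α > 1, and let D ≥ 1 be a real number. Set α₁ := max{k, α}. Let R ∈ (0,∞], and let β : [0,R) → [0,∞) be a non-decreasing function with β(r) > 0 for every r ∈ (0,R), such that for Lebesgue-almost every r ∈ (0,R) the function β is differentiable at r and satisfies β(r) ≤ 3D·I_{k,α}(β'(r)). Then for every r ∈ (0,R): β(r) ≥ r^k/((3D)^{k-1}·α₁^k) if r ≤ 3D·α₁, and β(r) ≥ r^α/((3D)^{α-1}·α₁^α) if r > 3D·α₁. In particular, with μ := min{1/((3D)^{k-1}·α₁^k), 1/((3D)^{α-1}·α₁^α)}, one has β(r) ≥ F_{k,α,μ}(r) for every r ∈ [0,R). -/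
/-!
Put `c = 3D`, `A = max k α` and let `ψ = FauxInv k α c` be the inverse of `F_{k,α,c}`, i.e.
`ψ t = (t/c)^{1/k}` for `t ≤ c` and `(t/c)^{1/α}` for `t > c`. Where the differential inequality
holds, `β/c ≤ I_{k,α}(β')` inverts to `β' ≥ (β/c)^{1-1/p}` with `p = k` or `p = α` according as
`β < c` or `β > c`, and the chain rule gives `(c A · ψ ∘ β)' ≥ A/p ≥ 1`: the powers of `β` cancel.
The level `β = c` is met only on a null set, since `β` is monotone and `β' = 0` would force
`β ≤ c · I_{k,α}(0) = 0`. The monotone function `c A · ψ ∘ β` increases by at least the integral of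
its derivative, so `r ≤ c A · ψ(β r)`, that is `F_{k,α,c}(r/(cA)) ≤ β r`; this is the two-case
bound, and it dominates `F_{k,α,μ}` because `cA ≥ 1`.
-/

open MeasureTheory ENNReal

open Set Filter Topology

theorem MonotoneOn.mul_sub_le_sub_of_ae_le_deriv {f : ℝ → ℝ} {a b m : ℝ} (hab : a ≤ b)
    (hf : MonotoneOn f (Icc a b)) (h : ∀ᵐ x, x ∈ Ioo a b → m ≤ deriv f x) :
    m * (b - a) ≤ f b - f a := by
  rw [← uIcc_of_le hab] at hf
  have hle : (fun _ => m) ≤ᵐ[volume.restrict (Icc a b)] deriv f := by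
    rwa [EventuallyLE, ← restrict_Ioo_eq_restrict_Icc, ae_restrict_iff' measurableSet_Ioo]
  calc m * (b - a) = ∫ _ in a..b, m := by simp [mul_comm]
    _ ≤ ∫ x in a..b, deriv f x :=
      intervalIntegral.integral_mono_ae_restrict hab intervalIntegrable_const
        hf.intervalIntegrable_deriv hle
    _ ≤ f b - f a := by
      have hmem := hf.intervalIntegral_deriv_mem_uIcc
      rw [uIcc_of_le (sub_nonneg.2 (hf (by simp) (by simp) hab))] at hmem
      exact hmem.2

theorem MonotoneOn.ae_ne_of_ae_deriv_ne_zero {f : ℝ → ℝ} {a b : ℝ} (v : ℝ)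
    (hf : MonotoneOn f (Ioo a b)) (h : ∀ᵐ x, x ∈ Ioo a b → deriv f x ≠ 0) :
    ∀ᵐ x, x ∈ Ioo a b → f x ≠ v := by
  set T := {x | x ∈ Ioo a b ∧ f x = v}
  have hT : ∀ x ∈ T, ∀ y ∈ T, ¬x < y := by
    rintro x ⟨hx, hfx⟩ y ⟨hy, hfy⟩ hlt
    have hxy : Ioo x y ⊆ Ioo a b := Ioo_subset_Ioo hx.1.le hy.2.le
    have hconst : EqOn f (fun _ => v) (Ioo x y) := fun z hz =>
      le_antisymm (hfy ▸ hf (hxy hz) hy hz.2.le) (hfx ▸ hf hx (hxy hz) hz.1.le)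
    have hnull : volume (Ioo x y) = 0 := by
      rw [measure_eq_zero_iff_ae_notMem]
      filter_upwards [h] with z hz hzI
      exact hz (hxy hzI) <| by
        rw [(hconst.eventuallyEq_of_mem (Ioo_mem_nhds hzI.1 hzI.2)).deriv_eq, deriv_const]
    rw [Real.volume_Ioo, ENNReal.ofReal_eq_zero] at hnull
    linarith
  have hsub : T.Subsingleton := fun x hx y hy =>
    le_antisymm (not_lt.1 (hT y hy x hx)) (not_lt.1 (hT x hx y hy))
  rw [ae_iff]
  simpa only [Classical.not_imp, not_not] using hsub.measure_zero volume

namespace Real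

theorem rpow_one_sub_inv_le_of_le_rpow {p s d : ℝ} (hp : 1 < p) (hs : 0 ≤ s) (hd : 0 ≤ d)
    (h : s ≤ d ^ (p / (p - 1))) : s ^ (1 - p⁻¹) ≤ d := by
  have hexp : p / (p - 1) * (1 - p⁻¹) = 1 := by
    field_simp [(by linarith : p - 1 ≠ 0)]
  have hq : 0 ≤ 1 - p⁻¹ := sub_nonneg.2 (inv_le_one_of_one_le₀ hp.le)
  calc s ^ (1 - p⁻¹) ≤ (d ^ (p / (p - 1))) ^ (1 - p⁻¹) := rpow_le_rpow hs h hq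
    _ = d := by rw [← rpow_mul hd, hexp, rpow_one]

end Real

theorem hasDerivAt_div_rpow {γ q t : ℝ} (ht : t / γ ≠ 0) :
    HasDerivAt (fun u => (u / γ) ^ q) (q * (t / γ) ^ (q - 1) / γ) t := by
  convert ((hasDerivAt_id' t).div_const γ).rpow_const (p := q) (Or.inl ht) using 1
  ring

section Profile

variable {k : ℕ} {α : ℝ}

theorem Iaux_zero (hk : 1 < (k : ℝ)) : Iaux k α 0 = 0 := by
  rw [Iaux, if_pos zero_le_one]
  exact Real.zero_rpow (div_pos (by linarith) (by linarith)).ne'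

theorem rpow_one_sub_inv_le_of_le_Iaux_of_lt_one (hk : 1 < (k : ℝ)) {s d : ℝ} (hs : 0 ≤ s)
    (hs1 : s < 1) (hd : 0 ≤ d) (h : s ≤ Iaux k α d) : s ^ (1 - (k : ℝ)⁻¹) ≤ d := by
  rcases le_or_gt d 1 with hd1 | hd1
  · rw [Iaux, if_pos hd1] at h
    exact Real.rpow_one_sub_inv_le_of_le_rpow hk hs hd h
  · exact (Real.rpow_le_one hs hs1.le (sub_nonneg.2 (inv_le_one_of_one_le₀ hk.le))).trans hd1.le

theorem rpow_one_sub_inv_le_of_le_Iaux_of_one_lt (hk : 1 ≤ (k : ℝ)) (hα : 1 < α) {s d : ℝ}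
    (hs1 : 1 < s) (hd : 0 ≤ d) (h : s ≤ Iaux k α d) : s ^ (1 - α⁻¹) ≤ d := by
  rcases le_or_gt d 1 with hd1 | hd1
  · rw [Iaux, if_pos hd1] at h
    have : d ^ ((k : ℝ) / ((k : ℝ) - 1)) ≤ 1 :=
      Real.rpow_le_one hd hd1 (div_nonneg (by linarith) (by linarith))
    linarith
  · rw [Iaux, if_neg hd1.not_ge] at h
    exact Real.rpow_one_sub_inv_le_of_le_rpow hα (by linarith) hd h

/-- The inverse of `Faux k α γ` on `[0, ∞)`. -/
noncomputable def FauxInv (k : ℕ) (α γ t : ℝ) : ℝ :=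
  if t ≤ γ then (t / γ) ^ (k : ℝ)⁻¹ else (t / γ) ^ α⁻¹

variable {γ : ℝ}

theorem FauxInv_nonneg (hγ : 0 ≤ γ) {t : ℝ} (ht : 0 ≤ t) : 0 ≤ FauxInv k α γ t := by
  unfold FauxInv; split <;> positivity

theorem monotoneOn_FauxInv (hα : 0 ≤ α) (hγ : 0 < γ) : MonotoneOn (FauxInv k α γ) (Ici 0) := by
  intro s hs t ht hst
  have hst' : s / γ ≤ t / γ := div_le_div_of_nonneg_right hst hγ.le
  have hs' : 0 ≤ s / γ := div_nonneg hs hγ.le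
  unfold FauxInv
  split_ifs with hsγ htγ htγ
  · exact Real.rpow_le_rpow hs' hst' (by positivity)
  · calc (s / γ) ^ (k : ℝ)⁻¹ ≤ 1 :=
          Real.rpow_le_one hs' ((div_le_one hγ).2 hsγ) (by positivity)
      _ ≤ (t / γ) ^ α⁻¹ := Real.one_le_rpow ((one_le_div hγ).2 (not_le.1 htγ).le) (by positivity)
  · exact absurd (hst.trans htγ) hsγ
  · exact Real.rpow_le_rpow hs' hst' (by positivity)

theorem Faux_le_of_le_FauxInv (hk : (k : ℝ) ≠ 0) (hα : 0 < α) (hγ : 0 < γ) {x t : ℝ}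
    (hx : 0 ≤ x) (ht : 0 ≤ t) (h : x ≤ FauxInv k α γ t) : Faux k α γ x ≤ t := by
  have ht' : 0 ≤ t / γ := div_nonneg ht hγ.le
  unfold FauxInv at h
  split_ifs at h with htγ
  · have hx1 : x ≤ 1 := h.trans (Real.rpow_le_one ht' ((div_le_one hγ).2 htγ) (by positivity))
    rw [Faux, if_pos hx1, ← le_div_iff₀' hγ]
    calc x ^ (k : ℝ) ≤ ((t / γ) ^ (k : ℝ)⁻¹) ^ (k : ℝ) := Real.rpow_le_rpow hx h (by positivity)
      _ = t / γ := Real.rpow_inv_rpow ht' hk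
  · unfold Faux
    split_ifs with hx1
    · calc γ * x ^ (k : ℝ) ≤ γ * 1 := by gcongr; exact Real.rpow_le_one hx hx1 (by positivity)
        _ ≤ t := by linarith
    · rw [← le_div_iff₀' hγ]
      calc x ^ α ≤ ((t / γ) ^ α⁻¹) ^ α := Real.rpow_le_rpow hx h hα.le
        _ = t / γ := Real.rpow_inv_rpow ht' hα.ne'

theorem hasDerivAt_FauxInv_of_lt {t : ℝ} (ht : 0 < t) (htγ : t < γ) :
    HasDerivAt (FauxInv k α γ) ((k : ℝ)⁻¹ * (t / γ) ^ ((k : ℝ)⁻¹ - 1) / γ) t :=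
  (hasDerivAt_div_rpow (div_pos ht (ht.trans htγ)).ne').congr_of_eventuallyEq <| by
    filter_upwards [Iio_mem_nhds htγ] with u hu using if_pos hu.le

theorem hasDerivAt_FauxInv_of_gt (hγ : 0 < γ) {t : ℝ} (htγ : γ < t) :
    HasDerivAt (FauxInv k α γ) (α⁻¹ * (t / γ) ^ (α⁻¹ - 1) / γ) t :=
  (hasDerivAt_div_rpow (div_pos (hγ.trans htγ) hγ).ne').congr_of_eventuallyEq <| by
    filter_upwards [Ioi_mem_nhds htγ] with u hu using if_neg (not_le.2 hu)

end Profile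

section GrowthEstimate

variable {k : ℕ} {α c A : ℝ}

theorem one_le_deriv_FauxInv_comp (hk : 1 < (k : ℝ)) (hα : 1 < α) (hc : 0 < c)
    (hkA : (k : ℝ) ≤ A) (hαA : α ≤ A) {β : ℝ → ℝ} {x : ℝ} (hβ : DifferentiableAt ℝ β x)
    (hd : 0 ≤ deriv β x) (hpos : 0 < β x) (hne : β x ≠ c)
    (h : β x ≤ c * Iaux k α (deriv β x)) :
    1 ≤ deriv (fun y => c * A * FauxInv k α c (β y)) x := by
  set s := β x / c
  have hs : 0 < s := div_pos hpos hc
  have hsI : s ≤ Iaux k α (deriv β x) := (div_le_iff₀' hc).2 h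
  obtain ⟨p, hp, hpA, hderiv, hsd⟩ : ∃ p, 1 < p ∧ p ≤ A ∧
      HasDerivAt (FauxInv k α c) (p⁻¹ * s ^ (p⁻¹ - 1) / c) (β x) ∧
      s ^ (1 - p⁻¹) ≤ deriv β x := by
    rcases hne.lt_or_gt with hlt | hgt
    · exact ⟨k, hk, hkA, hasDerivAt_FauxInv_of_lt hpos hlt,
        rpow_one_sub_inv_le_of_le_Iaux_of_lt_one hk hs.le ((div_lt_one hc).2 hlt) hd hsI⟩
    · exact ⟨α, hα, hαA, hasDerivAt_FauxInv_of_gt hc hgt,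
        rpow_one_sub_inv_le_of_le_Iaux_of_one_lt hk.le hα ((one_lt_div hc).2 hgt) hd hsI⟩
  have hp0 : 0 < p := by linarith
  have hA : 0 < A := by linarith
  have hcomp : HasDerivAt (fun y => c * A * FauxInv k α c (β y))
      (c * A * (p⁻¹ * s ^ (p⁻¹ - 1) / c * deriv β x)) x :=
    (hderiv.comp x hβ.hasDerivAt).const_mul (c * A)
  rw [hcomp.deriv]
  calc 1 ≤ A * p⁻¹ := by rw [← div_eq_mul_inv, one_le_div hp0]; exact hpA
    _ = A * p⁻¹ * (s ^ (p⁻¹ - 1) * s ^ (1 - p⁻¹)) := by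
      rw [← Real.rpow_add hs, sub_add_sub_cancel, sub_self, Real.rpow_zero, mul_one]
    _ ≤ A * p⁻¹ * (s ^ (p⁻¹ - 1) * deriv β x) := by gcongr
    _ = c * A * (p⁻¹ * s ^ (p⁻¹ - 1) / c * deriv β x) := by field_simp

theorem le_mul_FauxInv_of_ae_le_Iaux (hk : 1 < (k : ℝ)) (hα : 1 < α) (hc : 0 < c)
    (hkA : (k : ℝ) ≤ A) (hαA : α ≤ A) {β : ℝ → ℝ} {r : ℝ} (hr : 0 < r)
    (hmono : MonotoneOn β (Ioc 0 r)) (hpos : ∀ x ∈ Ioc 0 r, 0 < β x)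
    (hae : ∀ᵐ x, x ∈ Ioo 0 r → β x ≤ c * Iaux k α (deriv β x)) :
    r ≤ c * A * FauxInv k α c (β r) := by
  have hA : 0 < A := by linarith
  set f := fun y => c * A * FauxInv k α c (β y)
  have hf0 : ∀ y ∈ Ioc 0 r, 0 ≤ f y := fun y hy =>
    mul_nonneg (by positivity) (FauxInv_nonneg hc.le (hpos y hy).le)
  refine le_of_forall_pos_le_add fun ε hε => ?_
  rcases le_or_gt r ε with hrε | hεr
  · linarith [hf0 r ⟨hr, le_rfl⟩]
  have hIcc : Icc ε r ⊆ Ioc 0 r := Icc_subset_Ioc_iff hεr.le |>.2 ⟨hε, le_rfl⟩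
  have hIoo : Ioo ε r ⊆ Ioo 0 r := Ioo_subset_Ioo_left hε.le
  have hf : MonotoneOn f (Icc ε r) := fun x hx y hy hxy =>
    mul_le_mul_of_nonneg_left (((monotoneOn_FauxInv (by linarith) hc).comp (hmono.mono hIcc)
      fun z hz => (hpos z (hIcc hz)).le) hx hy hxy) (by positivity)
  have hmono' : MonotoneOn β (Ioo ε r) := hmono.mono (hIoo.trans Ioo_subset_Ioc_self)
  have hae' : ∀ᵐ x, x ∈ Ioo ε r → β x ≤ c * Iaux k α (deriv β x) :=
    hae.mono fun x hx hxI => hx (hIoo hxI)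
  have hd0 : ∀ᵐ x, x ∈ Ioo ε r → deriv β x ≠ 0 := by
    filter_upwards [hae'] with x hx hxI hd
    have := hpos x (Ioo_subset_Ioc_self (hIoo hxI))
    rw [hd, Iaux_zero hk, mul_zero] at hx
    linarith [hx hxI]
  have hslope : ∀ᵐ x, x ∈ Ioo ε r → 1 ≤ deriv f x := by
    filter_upwards [hae', hd0, hmono'.ae_ne_of_ae_deriv_ne_zero c hd0] with x hx hdx hne hxI
    have hnonneg : 0 ≤ deriv β x := by
      rw [← derivWithin_of_mem_nhds (Ioo_mem_nhds hxI.1 hxI.2)]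
      exact hmono'.derivWithin_nonneg
    exact one_le_deriv_FauxInv_comp hk hα hc hkA hαA (differentiableAt_of_deriv_ne_zero (hdx hxI))
      hnonneg (hpos x (Ioo_subset_Ioc_self (hIoo hxI))) (hne hxI) (hx hxI)
  have := hf.mul_sub_le_sub_of_ae_le_deriv hεr.le hslope
  linarith [hf0 ε ⟨hε, hεr.le⟩]

theorem Faux_div_le_of_ae_le_Iaux (hk : 1 < (k : ℝ)) (hα : 1 < α) (hc : 0 < c)
    (hkA : (k : ℝ) ≤ A) (hαA : α ≤ A) {β : ℝ → ℝ} {r : ℝ} (hr : 0 < r)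
    (hmono : MonotoneOn β (Ioc 0 r)) (hpos : ∀ x ∈ Ioc 0 r, 0 < β x)
    (hae : ∀ᵐ x, x ∈ Ioo 0 r → β x ≤ c * Iaux k α (deriv β x)) :
    Faux k α c (r / (c * A)) ≤ β r := by
  have hcA : 0 < c * A := mul_pos hc (by linarith)
  refine Faux_le_of_le_FauxInv (by positivity) (by linarith) hc (by positivity)
    (hpos r ⟨hr, le_rfl⟩).le ((div_le_iff₀' hcA).2 ?_)
  exact le_mul_FauxInv_of_ae_le_Iaux hk hα hc hkA hαA hr hmono hpos hae

end GrowthEstimate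

theorem mul_div_mul_rpow {c A r : ℝ} (p : ℝ) (hc : 0 < c) (hA : 0 < A) (hr : 0 ≤ r) :
    c * (r / (c * A)) ^ p = r ^ p / (c ^ (p - 1) * A ^ p) := by
  rw [Real.div_rpow hr (by positivity), Real.mul_rpow hc.le hA.le, Real.rpow_sub_one hc.ne']
  field_simp

theorem Faux_min_le_Faux_div {k : ℕ} {α c M r : ℝ} (hc : 0 ≤ c) (hM : 1 ≤ M) (hr : 0 ≤ r) :
    Faux k α (min (c * (1 / M) ^ (k : ℝ)) (c * (1 / M) ^ α)) r ≤ Faux k α c (r / M) := by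
  have hM0 : 0 < M := by linarith
  have hscale : ∀ p : ℝ, c * (1 / M) ^ p * r ^ p = c * (r / M) ^ p := fun p => by
    rw [mul_assoc, ← Real.mul_rpow (by positivity) hr, one_div_mul_eq_div]
  have hmin_k : ∀ x : ℝ, 0 ≤ x →
      min (c * (1 / M) ^ (k : ℝ)) (c * (1 / M) ^ α) * x ≤ c * (1 / M) ^ (k : ℝ) * x :=
    fun x => mul_le_mul_of_nonneg_right (min_le_left _ _)
  have hmin_α : ∀ x : ℝ, 0 ≤ x →
      min (c * (1 / M) ^ (k : ℝ)) (c * (1 / M) ^ α) * x ≤ c * (1 / M) ^ α * x :=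
    fun x => mul_le_mul_of_nonneg_right (min_le_right _ _)
  unfold Faux
  rcases le_or_gt r 1 with hr1 | hr1
  · rw [if_pos hr1, if_pos ((div_le_one hM0).2 (hr1.trans hM))]
    exact (hmin_k _ (by positivity)).trans_eq (hscale _)
  rw [if_neg hr1.not_ge]
  rcases le_or_gt r M with hrM | hrM
  · rw [if_pos ((div_le_one hM0).2 hrM)]
    rcases le_or_gt α k with hαk | hkα
    · calc _ ≤ c * (1 / M) ^ (k : ℝ) * r ^ α := hmin_k _ (by positivity)
        _ ≤ c * (1 / M) ^ (k : ℝ) * r ^ (k : ℝ) := mul_le_mul_of_nonneg_left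
          (Real.rpow_le_rpow_of_exponent_le hr1.le hαk) (by positivity)
        _ = c * (r / M) ^ (k : ℝ) := hscale _
    · calc _ ≤ c * (1 / M) ^ α * r ^ α := hmin_α _ (by positivity)
        _ = c * (r / M) ^ α := hscale _
        _ ≤ c * (r / M) ^ (k : ℝ) := mul_le_mul_of_nonneg_left
          (Real.rpow_le_rpow_of_exponent_ge (by positivity) ((div_le_one hM0).2 hrM) hkα.le) hc
  · rw [if_neg ((one_lt_div hM0).2 hrM).not_ge]
    exact (hmin_α _ (by positivity)).trans_eq (hscale _)

theorem growth_estimate_general (k : ℕ) (hk : 2 ≤ k) (α : ℝ) (hα : 1 < α)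
    (D : ℝ) (hD : 1 ≤ D) (R : ℝ≥0∞) (β : ℝ → ℝ)
    (hmono : MonotoneOn β {r : ℝ | 0 ≤ r ∧ ENNReal.ofReal r < R})
    (hnonneg : ∀ r : ℝ, 0 ≤ r → ENNReal.ofReal r < R → 0 ≤ β r)
    (hpos : ∀ r : ℝ, 0 < r → ENNReal.ofReal r < R → 0 < β r)
    (hae : ∀ᵐ r ∂(volume.restrict {r : ℝ | 0 < r ∧ ENNReal.ofReal r < R}),
      DifferentiableAt ℝ β r ∧ β r ≤ 3 * D * Iaux k α (deriv β r)) :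
    (∀ r : ℝ, 0 < r → ENNReal.ofReal r < R →
      (r ≤ 3 * D * max (k : ℝ) α →
        r ^ (k : ℝ) / ((3 * D) ^ ((k : ℝ) - 1) * (max (k : ℝ) α) ^ (k : ℝ)) ≤ β r) ∧
      (3 * D * max (k : ℝ) α < r →
        r ^ α / ((3 * D) ^ (α - 1) * (max (k : ℝ) α) ^ α) ≤ β r)) ∧
    (∀ r : ℝ, 0 ≤ r → ENNReal.ofReal r < R →
      Faux k α
        (min (1 / ((3 * D) ^ ((k : ℝ) - 1) * (max (k : ℝ) α) ^ (k : ℝ)))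
             (1 / ((3 * D) ^ (α - 1) * (max (k : ℝ) α) ^ α))) r ≤ β r) := by
  have hk' : (1 : ℝ) < k := by exact_mod_cast hk
  set c := 3 * D
  set A := max (k : ℝ) α
  have hc : 0 < c := by positivity
  have hA : 0 < A := by positivity
  have hcA : 1 ≤ c * A := by nlinarith [le_max_left (k : ℝ) α]
  have hlower : ∀ r, 0 ≤ r → ENNReal.ofReal r < R → Faux k α c (r / (c * A)) ≤ β r := by
    intro r hr hrR
    rcases hr.eq_or_lt with rfl | hr
    · simpa [Faux, Real.zero_rpow (by positivity : (k : ℝ) ≠ 0)] using hnonneg 0 le_rfl hrR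
    have hsub : Ioc 0 r ⊆ {x | 0 ≤ x ∧ ENNReal.ofReal x < R} := fun x hx =>
      ⟨hx.1.le, (ENNReal.ofReal_le_ofReal hx.2).trans_lt hrR⟩
    have hae' : ∀ᵐ x, x ∈ Ioo 0 r → β x ≤ c * Iaux k α (deriv β x) := by
      rw [← ae_restrict_iff' measurableSet_Ioo]
      refine ae_mono (Measure.restrict_mono (fun x hx => ?_) le_rfl) (hae.mono fun _ h => h.2)
      exact ⟨hx.1, (hsub (Ioo_subset_Ioc_self hx)).2⟩
    exact Faux_div_le_of_ae_le_Iaux hk' hα hc (le_max_left _ _) (le_max_right _ _) hr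
      (hmono.mono hsub) (fun x hx => hpos x hx.1 (hsub hx).2) hae'
  refine ⟨fun r hr hrR => ⟨fun hrM => ?_, fun hrM => ?_⟩, fun r hr hrR => ?_⟩
  · rw [← mul_div_mul_rpow _ hc hA hr.le]
    simpa [Faux, (div_le_one (by positivity)).2 hrM] using hlower r hr.le hrR
  · rw [← mul_div_mul_rpow _ hc hA hr.le]
    simpa [Faux, ((one_lt_div (by positivity)).2 hrM).not_ge] using hlower r hr.le hrR
  · have hμ : ∀ p : ℝ, 1 / (c ^ (p - 1) * A ^ p) = c * (1 / (c * A)) ^ p := fun p => by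
      rw [mul_div_mul_rpow p hc hA zero_le_one, Real.one_rpow]
    rw [hμ, hμ]
    exact (Faux_min_le_Faux_div hc.le hcA hr).trans (hlower r hr hrR)

/-- The growth estimate from the proof of Proposition 3.2 in Wenger's paper: a positive
non-decreasing function `β` on `[0,R)` (with `R ∈ (0,∞]`) satisfying the differential
inequality `β(r) ≤ 3D·I_{k,α}(β'(r))` almost everywhere grows at least like `F_{k,α,μ}`. -/
theorem growth_estimate (k : ℕ) (hk : 2 ≤ k) (α : ℝ) (hα : 1 < α)
    (D : ℝ) (hD : 1 ≤ D) (R : ℝ≥0∞) (hR : 0 < R) (β : ℝ → ℝ)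
    (hmono : MonotoneOn β {r : ℝ | 0 ≤ r ∧ ENNReal.ofReal r < R})
    (hnonneg : ∀ r : ℝ, 0 ≤ r → ENNReal.ofReal r < R → 0 ≤ β r)
    (hpos : ∀ r : ℝ, 0 < r → ENNReal.ofReal r < R → 0 < β r)
    (hae : ∀ᵐ r ∂(volume.restrict {r : ℝ | 0 < r ∧ ENNReal.ofReal r < R}),
      DifferentiableAt ℝ β r ∧ β r ≤ 3 * D * Iaux k α (deriv β r)) :
    (∀ r : ℝ, 0 < r → ENNReal.ofReal r < R →
      (r ≤ 3 * D * max (k : ℝ) α →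
        r ^ (k : ℝ) / ((3 * D) ^ ((k : ℝ) - 1) * (max (k : ℝ) α) ^ (k : ℝ)) ≤ β r) ∧
      (3 * D * max (k : ℝ) α < r →
        r ^ α / ((3 * D) ^ (α - 1) * (max (k : ℝ) α) ^ α) ≤ β r)) ∧
    (∀ r : ℝ, 0 ≤ r → ENNReal.ofReal r < R →
      Faux k α
        (min (1 / ((3 * D) ^ ((k : ℝ) - 1) * (max (k : ℝ) α) ^ (k : ℝ)))
             (1 / ((3 * D) ^ (α - 1) * (max (k : ℝ) α) ^ α))) r ≤ β r) :=
  growth_estimate_general k hk α hα D hD R β hmono hnonneg hpos hae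
end
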